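/- arXiv:0711.0173 — 6 statements merged into one kernel-verified Lean document; each statement's English description precedes it below -/
import Mathlib

section
/- Let (U_n) be a finite or countable family of pairwise disjoint nonempty bounded open subsets of ℝ^d and let U = ⋃_n U_n. Then for every index n and every x ∈ U_n one has dist(x, ∂U) = dist(x, ∂U_n), and consequently for every ε > 0, vol_d({x ∈ U : dist(x, ∂U) ≤ ε}) = ∑_n vol_d({x ∈ U_n : dist(x, ∂U_n) ≤ ε}). -/
open MeasureTheory Metric Set

/-- Let `(U_n)` be a finite or countable family of pairwise disjoint
nonempty bounded open subsets of `ℝ^d` and `U = ⋃ n, U_n`. Then for every index `n`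
and every `x ∈ U_n` one has `dist(x, ∂U) = dist(x, ∂U_n)`, and consequently for every
`ε > 0`,
`vol_d({x ∈ U : dist(x,∂U) ≤ ε}) = ∑_n vol_d({x ∈ U_n : dist(x,∂U_n) ≤ ε})`. -/
theorem stmt_2 (d : ℕ) (ι : Type) [Countable ι]
    (U : ι → Set (EuclideanSpace ℝ (Fin d)))
    (hne : ∀ n, (U n).Nonempty)
    (hopen : ∀ n, IsOpen (U n))
    (hbdd : ∀ n, Bornology.IsBounded (U n))
    (hdisj : Pairwise (Function.onFun Disjoint U)) :
    (∀ n, ∀ x ∈ U n,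
        infDist x (frontier (⋃ m, U m)) = infDist x (frontier (U n))) ∧
    ∀ ε : ℝ, 0 < ε →
      volume {x ∈ ⋃ m, U m | infDist x (frontier (⋃ m, U m)) ≤ ε}
        = ∑' n, volume {x ∈ U n | infDist x (frontier (U n)) ≤ ε} := by
  set T : Set (EuclideanSpace ℝ (Fin d)) := ⋃ m, U m with hT
  have hTopen : IsOpen T := isOpen_iUnion hopen
  -- frontier of each piece is contained in frontier of the union
  have fr_sub : ∀ n, frontier (U n) ⊆ frontier T := by
    intro n y hy
    have hyc : y ∈ closure (U n) := hy.1
    have hynU : y ∉ U n := by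
      intro h
      rw [(hopen n).frontier_eq] at hy
      exact hy.2 h
    have hyT : y ∉ T := by
      rintro hyT
      rcases mem_iUnion.1 hyT with ⟨m, hm⟩
      rcases eq_or_ne m n with rfl | hmn
      · exact hynU hm
      · have : U n ⊆ (U m)ᶜ := (hdisj hmn).symm.subset_compl_right
        have : closure (U n) ⊆ (U m)ᶜ :=
          (hopen m).isClosed_compl.closure_subset_iff.2 this
        exact this hyc hm
    constructor
    · exact closure_mono (subset_iUnion U n) hyc
    · rwa [hTopen.interior_eq]
  -- the pointwise equality of distances
  have key : ∀ n, ∀ x ∈ U n,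
      infDist x (frontier T) = infDist x (frontier (U n)) := by
    intro n x hx
    by_cases hfrn : frontier (U n) = ∅
    · -- then `U n` is clopen, hence everything, and both frontiers are empty
      have hclopen : IsClopen (U n) := isClopen_iff_frontier_eq_empty.2 hfrn
      have huniv : U n = univ := (isClopen_iff.1 hclopen).resolve_left
        (Nonempty.ne_empty (hne n))
      have hTuniv : T = univ := eq_univ_of_univ_subset (huniv ▸ subset_iUnion U n)
      rw [hfrn, hTuniv, frontier_univ]
    by_cases hfrT : frontier T = ∅
    · -- then `T = univ`, so `U n` is clopen (its complement is the union of the others)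
      have hTclopen : IsClopen T := isClopen_iff_frontier_eq_empty.2 hfrT
      have hTuniv : T = univ := (isClopen_iff.1 hTclopen).resolve_left
        (Nonempty.ne_empty ⟨x, mem_iUnion.2 ⟨n, hx⟩⟩)
      have hcompl : (U n)ᶜ = ⋃ m ∈ ({n}ᶜ : Set ι), U m := by
        ext z
        simp only [mem_compl_iff, mem_iUnion, exists_prop, mem_compl_iff,
          mem_singleton_iff]
        constructor
        · intro hz
          have hzT : z ∈ T := hTuniv ▸ mem_univ z
          rcases mem_iUnion.1 hzT with ⟨m, hm⟩
          refine ⟨m, ?_, hm⟩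
          rintro rfl; exact hz hm
        · rintro ⟨m, hmn, hm⟩ hzn
          exact (hdisj hmn).le_bot ⟨hm, hzn⟩
      have hUnclosed : IsClosed (U n) := by
        rw [← isOpen_compl_iff, hcompl]
        exact isOpen_biUnion fun m _ => hopen m
      exact absurd (isClopen_iff_frontier_eq_empty.1 ⟨hUnclosed, hopen n⟩) hfrn
    -- main case: both frontiers nonempty
    rcases nonempty_iff_ne_empty.2 hfrn with hfrn'
    rcases nonempty_iff_ne_empty.2 hfrT with hfrT'
    refine le_antisymm (infDist_le_infDist_of_subset (fr_sub n) hfrn') ?_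
    by_contra hlt
    push_neg at hlt
    set r := infDist x (frontier (U n)) with hr
    have hrpos : 0 < r := lt_of_le_of_lt infDist_nonneg hlt
    obtain ⟨y, hyfr, hyd⟩ := (infDist_lt_iff hfrT').1 hlt
    -- the ball of radius r around x is contained in `U n`
    have hball : ball x r ⊆ U n := by
      have hsub : ball x r ⊆ U n ∪ (closure (U n))ᶜ := by
        intro z hz
        by_cases hzc : z ∈ closure (U n)
        · left
          by_contra hzn
          have hzfr : z ∈ frontier (U n) := ⟨hzc, by rwa [(hopen n).interior_eq]⟩
          have := infDist_le_dist_of_mem (x := x) hzfr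
          rw [mem_ball, dist_comm] at hz
          linarith
        · exact Or.inr hzc
      exact (convex_ball x r).isPreconnected.subset_left_of_subset_union
        (hopen n) isClosed_closure.isOpen_compl
        (disjoint_compl_right.mono_left subset_closure) hsub
        ⟨x, mem_ball_self hrpos, hx⟩
    have hyU : y ∈ T := subset_iUnion U n (hball (mem_ball'.2 hyd))
    rw [hTopen.frontier_eq] at hyfr
    exact hyfr.2 hyU
  refine ⟨key, ?_⟩
  intro ε hε
  have hset : {x ∈ T | infDist x (frontier T) ≤ ε}
      = ⋃ n, {x ∈ U n | infDist x (frontier (U n)) ≤ ε} := by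
    ext z
    simp only [mem_setOf_eq, mem_iUnion]
    constructor
    · rintro ⟨hzT, hzd⟩
      rcases mem_iUnion.1 hzT with ⟨n, hn⟩
      exact ⟨n, hn, by rwa [← key n z hn]⟩
    · rintro ⟨n, hn, hd⟩
      exact ⟨mem_iUnion.2 ⟨n, hn⟩, by rwa [key n z hn]⟩
  rw [hset]
  refine measure_iUnion ?_ ?_
  · intro m n hmn
    exact ((hdisj hmn).mono (fun z hz => hz.1) (fun z hz => hz.1))
  · intro n
    exact (hopen n).measurableSet.inter
      ((isClosed_le (continuous_infDist_pt _) continuous_const).measurableSet)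
end

section
/- Let L = (0,1) \ C be the Cantor string. Then for every ε with 0 < ε ≤ 1/6, the Lebesgue measure of {x ∈ L : dist(x, ∂L) ≤ ε} equals 2ε(2^n − 1) + (3/2)(2/3)^{n+1}, where n = ⌊log(1/(2ε)) / log 3⌋. -/
/-!
Write `φ₀ x = x / 3`, `φ₁ x = x / 3 + 2 / 3`. Outside the closed middle third, one of the
expansions `x ↦ 3x`, `x ↦ 3x - 2` maps `(0,1) \ C` back into itself and at least triples the
distance to `C`; iterating, every point of `L = (0,1) \ C` lies in a gap `φ_w (1/3, 2/3)` for a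
finite word `w`. These gaps are pairwise disjoint, have endpoints in `C`, and a gap of generation
`n` has length `3^-(n+1)`, so its points within `ε` of `∂L = C` have measure
`min (2ε) 3^-(n+1)`. With `2^n` gaps in generation `n`, the generations `n < N` contribute
`2ε (2^N - 1)` and the rest a geometric tail `(2/3)^N`, where `N` is the `n` of the statement:
`3^-(N+1) < 2ε ≤ 3^-N`.
-/

open MeasureTheory Metric Set Function
open scoped ENNReal

theorem image_div_add_const_Ioo {c : ℝ} (hc : 0 < c) (d a b : ℝ) :
    (fun x => x / c + d) '' Ioo a b = Ioo (a / c + d) (b / c + d) := by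
  have : (fun x : ℝ => x / c + d) = (· + d) ∘ (· * c⁻¹) := by
    ext x
    simp [div_eq_mul_inv]
  rw [this, image_comp, image_mul_right_Ioo _ _ (inv_pos.2 hc), image_add_const_Ioo]
  simp only [div_eq_mul_inv]

theorem infDist_eq_min_of_mem_Ioo {s : Set ℝ} {a b x : ℝ} (ha : a ∈ s) (hb : b ∈ s)
    (hs : Disjoint (Ioo a b) s) (hx : x ∈ Ioo a b) : infDist x s = min (x - a) (b - x) := by
  refine le_antisymm (le_min ?_ ?_) ((le_infDist ⟨a, ha⟩).2 fun c hc => ?_)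
  · simpa [Real.dist_eq, abs_of_pos (sub_pos.2 hx.1)] using infDist_le_dist_of_mem (x := x) ha
  · simpa [Real.dist_eq, abs_of_neg (sub_neg.2 hx.2)] using infDist_le_dist_of_mem (x := x) hb
  · have hc' : c ∉ Ioo a b := fun h => disjoint_left.1 hs h hc
    rw [mem_Ioo, not_and_or, not_lt, not_lt] at hc'
    rw [Real.dist_eq]
    rcases hc' with h | h
    · exact (min_le_left _ _).trans ((by linarith : x - a ≤ x - c).trans (le_abs_self _))
    · exact (min_le_right _ _).trans ((by linarith : b - x ≤ -(x - c)).trans (neg_le_abs _))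

theorem volume_Ioo_sep_min_sub_le (a b : ℝ) {ε : ℝ} (hε : 0 ≤ ε) :
    volume {x ∈ Ioo a b | min (x - a) (b - x) ≤ ε}
      = ENNReal.ofReal (min (2 * ε) (b - a)) := by
  rcases lt_or_ge (2 * ε) (b - a) with h | h
  · have hset :
        {x ∈ Ioo a b | min (x - a) (b - x) ≤ ε} = Ioc a (a + ε) ∪ Ico (b - ε) b := by
      ext x
      simp only [mem_ofPred_eq, mem_Ioo, mem_union, mem_Ioc, mem_Ico, min_le_iff]
      constructor
      · rintro ⟨⟨h₁, h₂⟩, h₃ | h₃⟩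
        · exact Or.inl ⟨h₁, by linarith⟩
        · exact Or.inr ⟨by linarith, h₂⟩
      · rintro (⟨h₁, h₂⟩ | ⟨h₁, h₂⟩)
        · exact ⟨⟨h₁, by linarith⟩, Or.inl (by linarith)⟩
        · exact ⟨⟨by linarith, h₂⟩, Or.inr (by linarith)⟩
    have hdisj : Disjoint (Ioc a (a + ε)) (Ico (b - ε) b) :=
      disjoint_left.2 fun x hx hx' => by linarith [hx.2, hx'.1]
    rw [hset, measure_union hdisj measurableSet_Ico, Real.volume_Ioc, Real.volume_Ico,
      ← ENNReal.ofReal_add (by linarith) (by linarith), min_eq_left h.le]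
    ring_nf
  · have hset : {x ∈ Ioo a b | min (x - a) (b - x) ≤ ε} = Ioo a b :=
      sep_eq_self_iff_mem_true.2 fun x hx => by
        rw [min_le_iff]
        by_contra! h'
        linarith [h'.1, h'.2]
    rw [hset, Real.volume_Ioo, min_eq_right h]

theorem ENNReal.tsum_list_comp_length {α : Type*} [Fintype α] (g : ℕ → ℝ≥0∞) :
    ∑' w : List α, g w.length = ∑' n, (Fintype.card α : ℝ≥0∞) ^ n * g n := by
  rw [← List.equivSigmaTuple.symm.tsum_eq, ENNReal.tsum_sigma']
  congr with n
  simp [tsum_fintype]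

theorem hasSum_two_pow_mul_min {δ : ℝ} {n : ℕ} (hlo : (3 : ℝ)⁻¹ ^ (n + 1) < δ)
    (hhi : δ ≤ 3⁻¹ ^ n) :
    HasSum (fun k : ℕ => 2 ^ k * min δ (3⁻¹ ^ (k + 1))) (δ * (2 ^ n - 1) + (2 / 3) ^ n) := by
  have hhead :
      ∑ k ∈ Finset.range n, (2 : ℝ) ^ k * min δ (3⁻¹ ^ (k + 1)) = δ * (2 ^ n - 1) := by
    rw [Finset.sum_congr rfl fun k hk => by
      rw [min_eq_left (hhi.trans (pow_le_pow_of_le_one (by norm_num) (by norm_num)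
        (Finset.mem_range.1 hk)))], ← Finset.sum_mul, geom_sum_eq (by norm_num : (2 : ℝ) ≠ 1)]
    ring
  have htail (k : ℕ) :
      (2 : ℝ) ^ (k + n) * min δ (3⁻¹ ^ (k + n + 1)) = (2 / 3) ^ n / 3 * (2 / 3) ^ k := by
    rw [min_eq_right ((pow_le_pow_of_le_one (by norm_num) (by norm_num) (by omega)).trans hlo.le),
      div_pow, div_pow, inv_pow]
    ring
  rw [← hasSum_nat_add_iff' n, hhead, add_sub_cancel_left]
  have hgeom :=
    (hasSum_geometric_of_lt_one (by norm_num) (by norm_num : (2 / 3 : ℝ) < 1)).mul_left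
      ((2 / 3) ^ n / 3)
  rw [show (2 / 3 : ℝ) ^ n / 3 * (1 - 2 / 3)⁻¹ = (2 / 3) ^ n by norm_num] at hgeom
  simpa only [htail] using hgeom

theorem tsum_two_pow_mul_ofReal_min {δ : ℝ} {n : ℕ} (hlo : (3 : ℝ)⁻¹ ^ (n + 1) < δ)
    (hhi : δ ≤ 3⁻¹ ^ n) :
    ∑' k : ℕ, (2 : ℝ≥0∞) ^ k * ENNReal.ofReal (min δ (3⁻¹ ^ (k + 1)))
      = ENNReal.ofReal (δ * (2 ^ n - 1) + (2 / 3) ^ n) := by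
  have hδ : 0 ≤ δ := (pow_pos (by norm_num) _).le.trans hlo.le
  have h := hasSum_two_pow_mul_min hlo hhi
  rw [← h.tsum_eq, ENNReal.ofReal_tsum_of_nonneg (fun k => by positivity) h.summable]
  congr with k
  rw [ENNReal.ofReal_mul (by positivity), ENNReal.ofReal_pow zero_le_two, ENNReal.ofReal_ofNat]

theorem inv_pow_natFloor_logb_inv_bounds {b δ : ℝ} (hb : 1 < b) (hδ₀ : 0 < δ)
    (hδ₁ : δ ≤ 1) :
    b⁻¹ ^ (⌊Real.logb b δ⁻¹⌋₊ + 1) < δ ∧ δ ≤ b⁻¹ ^ ⌊Real.logb b δ⁻¹⌋₊ := by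
  have hlo := Nat.lt_floor_add_one (Real.logb b δ⁻¹)
  have hhi := Nat.floor_le (Real.logb_nonneg hb ((one_le_inv₀ hδ₀).2 hδ₁))
  rw [Real.logb_lt_iff_lt_rpow hb (inv_pos.2 hδ₀), ← Nat.cast_add_one,
    Real.rpow_natCast] at hlo
  rw [Real.le_logb_iff_rpow_le hb (inv_pos.2 hδ₀), Real.rpow_natCast] at hhi
  rw [inv_pow, inv_pow]
  exact ⟨inv_lt_of_inv_lt₀ hδ₀ hlo, le_inv_of_le_inv₀ (by positivity) hhi⟩

namespace CantorString

/- Defined by cases so that `branch false` and `branch true` unfold definitionally to the maps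
`fun x => x / 3` and `fun x => x / 3 + 2 / 3`. -/
noncomputable def branch : Bool → ℝ → ℝ
  | false => fun x => x / 3
  | true => fun x => x / 3 + 2 / 3

noncomputable def wordMap : List Bool → ℝ → ℝ
  | [] => id
  | b :: w => branch b ∘ wordMap w

def gap (w : List Bool) : Set ℝ := wordMap w '' Ioo (1 / 3) (2 / 3)

structure IsCantorSet (C : Set ℝ) : Prop where
  nonempty : C.Nonempty
  isCompact : IsCompact C
  eq_union : C = branch false '' C ∪ branch true '' C

theorem branch_injective (b : Bool) : Injective (branch b) := by
  intro x y h
  cases b <;> simp only [branch] at h <;> linarith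

theorem dist_branch (b : Bool) (x y : ℝ) : dist (branch b x) (branch b y) = dist x y / 3 := by
  cases b <;> simp only [branch, Real.dist_eq, add_sub_add_right_eq_sub, ← sub_div, abs_div,
    abs_of_pos (by norm_num : (0 : ℝ) < 3)]

theorem branch_mapsTo_Ioo (b : Bool) : MapsTo (branch b) (Ioo 0 1) (Ioo 0 1) := by
  rintro x ⟨h0, h1⟩
  cases b <;> constructor <;> simp only [branch] <;> linarith

theorem eq_of_branch_eq {b b' : Bool} {x y : ℝ} (hx : x ∈ Ioo 0 1) (hy : y ∈ Icc 0 1)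
    (h : branch b x = branch b' y) : b = b' ∧ x = y := by
  obtain ⟨hx0, hx1⟩ := hx
  obtain ⟨hy0, hy1⟩ := hy
  cases b <;> cases b' <;> simp only [branch] at h <;>
    first | exact ⟨rfl, by linarith⟩ | exact absurd h (by linarith)

theorem exists_branch_eq_of_mem_Ioo {x : ℝ} (hx : x ∈ Ioo 0 1)
    (hmid : x ∉ Icc (1 / 3) (2 / 3)) :
    ∃ b, ∃ y ∈ Ioo 0 1, branch b y = x := by
  obtain ⟨hx0, hx1⟩ := hx
  rcases lt_or_ge x (1 / 3) with hlt | hge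
  · exact ⟨false, 3 * x, ⟨by linarith, by linarith⟩, by simp only [branch]; ring⟩
  · have : 2 / 3 < x := lt_of_not_ge fun h => hmid ⟨hge, h⟩
    exact ⟨true, 3 * x - 2, ⟨by linarith, by linarith⟩, by simp only [branch]; ring⟩

theorem wordMap_apply (w : List Bool) (x : ℝ) : wordMap w x = x / 3 ^ w.length + wordMap w 0 := by
  induction w with
  | nil => simp [wordMap]
  | cons b w ih =>
    cases b <;> simp only [wordMap, comp_apply, branch, List.length_cons, ih] <;> ring

theorem dist_wordMap (w : List Bool) (x y : ℝ) :
    dist (wordMap w x) (wordMap w y) = dist x y / 3 ^ w.length := by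
  rw [wordMap_apply w x, wordMap_apply w y, Real.dist_eq, Real.dist_eq, add_sub_add_right_eq_sub,
    ← sub_div, abs_div, abs_of_pos (by positivity : (0 : ℝ) < 3 ^ w.length)]

theorem image_wordMap_Ioo (w : List Bool) (a b : ℝ) :
    wordMap w '' Ioo a b = Ioo (wordMap w a) (wordMap w b) := by
  rw [funext (wordMap_apply w), image_div_add_const_Ioo (by positivity)]

theorem gap_nil : gap [] = Ioo (1 / 3) (2 / 3) := image_id _

theorem gap_cons (b : Bool) (w : List Bool) : gap (b :: w) = branch b '' gap w := by
  rw [gap, gap, wordMap, image_comp]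

theorem gap_eq_Ioo (w : List Bool) : gap w = Ioo (wordMap w (1 / 3)) (wordMap w (2 / 3)) :=
  image_wordMap_Ioo w _ _

theorem wordMap_two_thirds_sub_wordMap_one_third (w : List Bool) :
    wordMap w (2 / 3) - wordMap w (1 / 3) = 3⁻¹ ^ (w.length + 1) := by
  rw [wordMap_apply w (2 / 3), wordMap_apply w (1 / 3), inv_pow]
  ring

theorem gap_subset_Ioo (w : List Bool) : gap w ⊆ Ioo 0 1 := by
  induction w with
  | nil => exact gap_nil ▸ Ioo_subset_Ioo (by norm_num) (by norm_num)
  | cons b w ih => exact gap_cons b w ▸ (branch_mapsTo_Ioo b).image_subset.trans' (image_mono ih)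

theorem gap_cons_subset (b : Bool) (w : List Bool) : gap (b :: w) ⊆ branch b '' Ioo 0 1 :=
  gap_cons b w ▸ image_mono (gap_subset_Ioo w)

theorem disjoint_gap_nil_gap_cons (b : Bool) (w : List Bool) :
    Disjoint (gap []) (gap (b :: w)) := by
  refine Disjoint.mono_right (gap_cons_subset b w) (disjoint_left.2 ?_)
  rintro _ hx ⟨y, ⟨hy0, hy1⟩, rfl⟩
  rw [gap_nil] at hx
  cases b <;> simp only [branch, mem_Ioo] at hx <;> linarith [hx.1, hx.2]

theorem disjoint_gap_cons_false_true (w w' : List Bool) :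
    Disjoint (gap (false :: w)) (gap (true :: w')) := by
  refine Disjoint.mono (gap_cons_subset _ w) (gap_cons_subset _ w') (disjoint_left.2 ?_)
  rintro _ ⟨y, ⟨hy0, hy1⟩, rfl⟩ ⟨z, ⟨hz0, hz1⟩, hzy⟩
  simp only [branch] at hzy
  linarith

theorem pairwise_disjoint_gap : Pairwise (Disjoint on gap) := by
  intro w w' hne
  induction w generalizing w' with
  | nil =>
    obtain _ | ⟨b, w'⟩ := w'
    · exact absurd rfl hne
    · exact disjoint_gap_nil_gap_cons b w'
  | cons b w ih =>
    obtain _ | ⟨b', w'⟩ := w'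
    · exact (disjoint_gap_nil_gap_cons b w).symm
    by_cases hb : b = b'
    · subst hb
      rw [onFun, gap_cons, gap_cons]
      exact (disjoint_image_iff (branch_injective b)).2 (ih fun h => hne (congrArg (b :: ·) h))
    · cases b <;> cases b'
      · exact absurd rfl hb
      · exact disjoint_gap_cons_false_true w w'
      · exact (disjoint_gap_cons_false_true w' w).symm
      · exact absurd rfl hb

variable {C : Set ℝ}

theorem mem_iff_exists_branch (h : C = branch false '' C ∪ branch true '' C) {x : ℝ} :
    x ∈ C ↔ ∃ b, ∃ y ∈ C, branch b y = x := by
  conv_lhs => rw [h]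
  simp only [mem_union, mem_image, Bool.exists_bool]

theorem branch_mem (h : C = branch false '' C ∪ branch true '' C) (b : Bool) {y : ℝ}
    (hy : y ∈ C) : branch b y ∈ C :=
  (mem_iff_exists_branch h).2 ⟨b, y, hy, rfl⟩

theorem wordMap_mem (h : C = branch false '' C ∪ branch true '' C) (w : List Bool) {y : ℝ}
    (hy : y ∈ C) : wordMap w y ∈ C := by
  induction w with
  | nil => exact hy
  | cons b w ih => exact branch_mem h b ih

theorem exists_wordMap_eq (h : C = branch false '' C ∪ branch true '' C) (k : ℕ) {x : ℝ}
    (hx : x ∈ C) : ∃ w : List Bool, w.length = k ∧ ∃ y ∈ C, wordMap w y = x := by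
  induction k generalizing x with
  | zero => exact ⟨[], rfl, x, hx, rfl⟩
  | succ k ih =>
    obtain ⟨b, y, hy, rfl⟩ := (mem_iff_exists_branch h).1 hx
    obtain ⟨w, hw, z, hz, rfl⟩ := ih hy
    exact ⟨b :: w, by rw [List.length_cons, hw], z, hz, rfl⟩

namespace IsCantorSet

theorem sSup_eq_one (hC : IsCantorSet C) : sSup C = 1 := by
  have hbdd := hC.isCompact.bddAbove
  have hM := hC.isCompact.sSup_mem hC.nonempty
  have h₁ : branch true (sSup C) ≤ sSup C := le_csSup hbdd (branch_mem hC.eq_union true hM)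
  obtain ⟨b, y, hy, hyM⟩ := (mem_iff_exists_branch hC.eq_union).1 hM
  have h₂ : y ≤ sSup C := le_csSup hbdd hy
  cases b <;> simp only [branch] at h₁ hyM <;> linarith

theorem sInf_eq_zero (hC : IsCantorSet C) : sInf C = 0 := by
  have hbdd := hC.isCompact.bddBelow
  have hm := hC.isCompact.sInf_mem hC.nonempty
  have h₁ : sInf C ≤ branch false (sInf C) := csInf_le hbdd (branch_mem hC.eq_union false hm)
  obtain ⟨b, y, hy, hym⟩ := (mem_iff_exists_branch hC.eq_union).1 hm
  have h₂ : sInf C ≤ y := csInf_le hbdd hy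
  cases b <;> simp only [branch] at h₁ hym <;> linarith

theorem zero_mem (hC : IsCantorSet C) : (0 : ℝ) ∈ C :=
  hC.sInf_eq_zero ▸ hC.isCompact.sInf_mem hC.nonempty

theorem one_mem (hC : IsCantorSet C) : (1 : ℝ) ∈ C :=
  hC.sSup_eq_one ▸ hC.isCompact.sSup_mem hC.nonempty

theorem subset_Icc (hC : IsCantorSet C) : C ⊆ Icc 0 1 := fun _ hx =>
  ⟨hC.sInf_eq_zero ▸ csInf_le hC.isCompact.bddBelow hx,
    hC.sSup_eq_one ▸ le_csSup hC.isCompact.bddAbove hx⟩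

theorem one_third_mem (hC : IsCantorSet C) : (1 / 3 : ℝ) ∈ C :=
  branch_mem hC.eq_union false hC.one_mem

theorem two_thirds_mem (hC : IsCantorSet C) : (2 / 3 : ℝ) ∈ C := by
  simpa [branch] using branch_mem hC.eq_union true hC.zero_mem

theorem disjoint_gap (hC : IsCantorSet C) (w : List Bool) : Disjoint (gap w) C := by
  induction w with
  | nil =>
    rw [gap_nil, disjoint_left]
    rintro x ⟨h₁, h₂⟩ hx
    obtain ⟨b, y, hy, rfl⟩ := (mem_iff_exists_branch hC.eq_union).1 hx
    have := hC.subset_Icc hy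
    cases b <;> simp only [branch] at h₁ h₂ <;> linarith [this.1, this.2]
  | cons b w ih =>
    rw [gap_cons, disjoint_left]
    rintro _ ⟨z, hz, rfl⟩ hx
    obtain ⟨b', y, hy, hyz⟩ := (mem_iff_exists_branch hC.eq_union).1 hx
    obtain ⟨rfl, rfl⟩ := eq_of_branch_eq (gap_subset_Ioo w hz) (hC.subset_Icc hy) hyz.symm
    exact disjoint_left.1 ih hz hy

theorem three_mul_infDist_branch_le (hC : IsCantorSet C) (b : Bool) (y : ℝ) :
    3 * infDist (branch b y) C ≤ infDist y C := by
  refine (le_infDist hC.nonempty).2 fun c hc => ?_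
  have := infDist_le_dist_of_mem (x := branch b y) (branch_mem hC.eq_union b hc)
  rw [dist_branch] at this
  linarith

theorem exists_mem_gap_of_one_lt_mul_infDist (hC : IsCantorSet C) (k : ℕ) :
    ∀ x ∈ Ioo 0 1, x ∉ C → 1 < 3 ^ k * infDist x C → ∃ w, x ∈ gap w := by
  induction k with
  | zero =>
    intro x hx _ hlt
    have := infDist_le_dist_of_mem (x := x) hC.zero_mem
    rw [Real.dist_eq, sub_zero, abs_of_pos hx.1] at this
    linarith [hx.2, pow_zero (3 : ℝ)]
  | succ k ih =>
    intro x hx hxC hlt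
    by_cases hmid : x ∈ Ioo (1 / 3) (2 / 3)
    · exact ⟨[], gap_nil ▸ hmid⟩
    have hmid' : x ∉ Icc (1 / 3) (2 / 3) := fun h => by
      rcases h.1.eq_or_lt with rfl | h₁
      · exact hxC hC.one_third_mem
      rcases h.2.eq_or_lt with rfl | h₂
      · exact hxC hC.two_thirds_mem
      exact hmid ⟨h₁, h₂⟩
    obtain ⟨b, y, hy, rfl⟩ := exists_branch_eq_of_mem_Ioo hx hmid'
    have hyC : y ∉ C := fun h => hxC (branch_mem hC.eq_union b h)
    have : 1 < 3 ^ k * infDist y C := by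
      calc 1 < 3 ^ (k + 1) * infDist (branch b y) C := hlt
        _ = 3 ^ k * (3 * infDist (branch b y) C) := by ring
        _ ≤ 3 ^ k * infDist y C := by gcongr; exact hC.three_mul_infDist_branch_le b y
    obtain ⟨w, hw⟩ := ih y hy hyC this
    exact ⟨b :: w, gap_cons b w ▸ mem_image_of_mem _ hw⟩

theorem Ioo_diff_eq_iUnion_gap (hC : IsCantorSet C) : Ioo 0 1 \ C = ⋃ w, gap w := by
  ext x
  simp only [mem_sdiff, mem_iUnion]
  constructor
  · rintro ⟨hx, hxC⟩
    have hpos : 0 < infDist x C :=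
      (hC.isCompact.isClosed.notMem_iff_infDist_pos hC.nonempty).1 hxC
    obtain ⟨k, hk⟩ := pow_unbounded_of_one_lt (infDist x C)⁻¹ (by norm_num : (1 : ℝ) < 3)
    exact hC.exists_mem_gap_of_one_lt_mul_infDist k x hx hxC
      ((inv_lt_iff_one_lt_mul₀ hpos).1 hk)
  · rintro ⟨w, hw⟩
    exact ⟨gap_subset_Ioo w hw, disjoint_left.1 (hC.disjoint_gap w) hw⟩

theorem subset_closure_Ioo_diff (hC : IsCantorSet C) : C ⊆ closure (Ioo 0 1 \ C) := by
  intro x hx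
  rw [Metric.mem_closure_iff]
  intro δ hδ
  obtain ⟨k, hk⟩ := exists_pow_lt_of_lt_one hδ (by norm_num : (3 : ℝ)⁻¹ < 1)
  obtain ⟨w, rfl, y, hy, rfl⟩ := exists_wordMap_eq hC.eq_union k hx
  have hgap : wordMap w (1 / 2) ∈ gap w := mem_image_of_mem _ ⟨by norm_num, by norm_num⟩
  refine ⟨wordMap w (1 / 2), hC.Ioo_diff_eq_iUnion_gap ▸ mem_iUnion.2 ⟨w, hgap⟩, ?_⟩
  have hy' := hC.subset_Icc hy
  calc dist (wordMap w y) (wordMap w (1 / 2)) = dist y (1 / 2) / 3 ^ w.length := dist_wordMap ..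
    _ ≤ 1 / 3 ^ w.length := by
      gcongr
      rw [Real.dist_eq, abs_le]
      constructor <;> linarith [hy'.1, hy'.2]
    _ = 3⁻¹ ^ w.length := by rw [one_div, inv_pow]
    _ < δ := hk

theorem frontier_Ioo_diff (hC : IsCantorSet C) : frontier (Ioo 0 1 \ C) = C := by
  rw [(isOpen_Ioo.sdiff hC.isCompact.isClosed).frontier_eq]
  refine Subset.antisymm ?_ fun x hx => ⟨hC.subset_closure_Ioo_diff hx, fun h => h.2 hx⟩
  rintro x ⟨hcl, hxL⟩
  have hx : x ∈ Icc (0 : ℝ) 1 := by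
    simpa [closure_Ioo zero_ne_one] using closure_mono sdiff_subset hcl
  by_contra hxC
  rcases hx.1.eq_or_lt with rfl | h₀
  · exact hxC hC.zero_mem
  rcases hx.2.eq_or_lt with rfl | h₁
  · exact hxC hC.one_mem
  exact hxL ⟨⟨h₀, h₁⟩, hxC⟩

theorem volume_gap_sep_infDist_le (hC : IsCantorSet C) {ε : ℝ} (hε : 0 ≤ ε)
    (w : List Bool) :
    volume {x ∈ gap w | infDist x C ≤ ε}
      = ENNReal.ofReal (min (2 * ε) (3⁻¹ ^ (w.length + 1))) := by
  have ha := wordMap_mem hC.eq_union w hC.one_third_mem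
  have hb := wordMap_mem hC.eq_union w hC.two_thirds_mem
  have hdisj := hC.disjoint_gap w
  rw [gap_eq_Ioo] at hdisj ⊢
  rw [← wordMap_two_thirds_sub_wordMap_one_third, ← volume_Ioo_sep_min_sub_le _ _ hε]
  congr 1
  ext x
  exact and_congr_right fun hx => by rw [infDist_eq_min_of_mem_Ioo ha hb hdisj hx]

theorem volume_sep_infDist_le (hC : IsCantorSet C) {ε : ℝ} (hε : 0 ≤ ε) :
    volume {x ∈ Ioo 0 1 \ C | infDist x C ≤ ε}
      = ∑' n : ℕ, (2 : ℝ≥0∞) ^ n * ENNReal.ofReal (min (2 * ε) (3⁻¹ ^ (n + 1))) := by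
  have hunion :
      {x ∈ Ioo 0 1 \ C | infDist x C ≤ ε} = ⋃ w, {x ∈ gap w | infDist x C ≤ ε} := by
    rw [hC.Ioo_diff_eq_iUnion_gap]
    ext x
    simp only [mem_iUnion, exists_and_right, mem_ofPred_eq]
  have hdisj : Pairwise (Disjoint on fun w => {x ∈ gap w | infDist x C ≤ ε}) :=
    fun w w' h => (pairwise_disjoint_gap h).mono (sep_subset _ _) (sep_subset _ _)
  have hmeas (w : List Bool) : MeasurableSet {x ∈ gap w | infDist x C ≤ ε} :=
    (gap_eq_Ioo w ▸ measurableSet_Ioo).inter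
      (measurableSet_le (continuous_infDist_pt C).measurable measurable_const)
  rw [hunion, measure_iUnion hdisj hmeas, tsum_congr (hC.volume_gap_sep_infDist_le hε),
    ENNReal.tsum_list_comp_length fun n => ENNReal.ofReal (min (2 * ε) (3⁻¹ ^ (n + 1))),
    Fintype.card_bool, Nat.cast_ofNat]

end IsCantorSet

end CantorString

open CantorString in
/-- Let `C` be the ternary Cantor set (the unique nonempty compact
subset of `ℝ` with `C = (1/3)C ∪ ((1/3)C + 2/3)`) and `L = (0,1) \ C` the Cantor
string. Then for every `ε` with `0 < ε ≤ 1/6`, the Lebesgue measure of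
`{x ∈ L : dist(x, ∂L) ≤ ε}` equals `2ε(2^n − 1) + (3/2)(2/3)^{n+1}`, where
`n = ⌊log(1/(2ε)) / log 3⌋`. -/
theorem stmt_4 (C : Set ℝ)
    (hCne : C.Nonempty) (hCc : IsCompact C)
    (hC : C = (fun x : ℝ => x / 3) '' C ∪ (fun x : ℝ => x / 3 + 2 / 3) '' C)
    (L : Set ℝ) (hL : L = Set.Ioo (0 : ℝ) 1 \ C) :
    ∀ ε : ℝ, 0 < ε → ε ≤ 1 / 6 →
      volume {x ∈ L | infDist x (frontier L) ≤ ε}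
        = ENNReal.ofReal
            (2 * ε * (2 ^ (⌊Real.log (1 / (2 * ε)) / Real.log 3⌋₊) - 1)
              + (3 / 2) * (2 / 3) ^ (⌊Real.log (1 / (2 * ε)) / Real.log 3⌋₊ + 1)) := by
  intro ε hε hε₆
  have hCantor : IsCantorSet C := ⟨hCne, hCc, hC⟩
  obtain ⟨hlo, hhi⟩ := inv_pow_natFloor_logb_inv_bounds (b := 3) (δ := 2 * ε) (by norm_num)
    (by positivity) (by linarith)
  rw [one_div, Real.log_div_log, hL, hCantor.frontier_Ioo_diff,
    hCantor.volume_sep_infDist_le hε.le, tsum_two_pow_mul_ofReal_min hlo hhi]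
  congr 1
  ring
end

section
/- Let L = (0,1) \ C be the Cantor string, D = log 2 / log 3, p = 2π / log 3, and g = 1/6. Then for every ε with 0 < ε ≤ 1/6, the symmetric partial sums ∑_{n=−N}^{N} (1/(D + i n p) − 1/(D − 1 + i n p)) · (ε/g)^{1 − D − i n p} converge as N → ∞, and V_L(ε) = (1/(3 log 3)) · lim_{N→∞} ∑_{n=−N}^{N} (1/(D + i n p) − 1/(D − 1 + i n p)) (ε/g)^{1 − D − i n p} − 2ε, where V_L(ε) is the Lebesgue measure of {x ∈ L : dist(x, ∂L) ≤ ε} and (ε/g)^z := exp(z · log(ε/g)) with the real logarithm. -/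
/-!
For `ε ≤ 1/6` the two outer thirds of `L` are copies of `L` scaled by `1/3`, while the middle gap
`(1/3, 2/3)` contributes `2ε`; hence `V(ε) = 2ε + (2/3) V(3ε)`, and `V(ε) = 1` for `ε ≥ 1/6`.
Iterating, `V(ε) = 2ε(2^k - 1) + (2/3)^k` when `3^{-k-1} < 2ε ≤ 3^{-k}`, which can be rewritten as
`V(ε) + 2ε = (2/3) (6ε)^{1-D} G(-log (6ε))` with `G` the `log 3`-periodic extension of
`t ↦ e^{-Dt} + e^{(1-D)t}` from `[0, log 3)`. Since `e^{-D log 3} + e^{(1-D) log 3} = 2`, `G` is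
continuous, and its Fourier coefficients `(1/(D + inp) - 1/(D - 1 + inp)) / (2 log 3)` are
`O(n⁻²)`, so its Fourier series converges to it pointwise. Multiplying by `(6ε)^{1-D}` turns
`e^{inpt}` at `t = -log (6ε)` into `(ε/g)^{1-D-inp}`.
-/

open MeasureTheory Metric Filter Set Complex
open scoped Real Topology

lemma frontier_Ioo_sdiff {a b : ℝ} {C : Set ℝ} (hab : a < b) (hC : IsClosed C)
    (hCi : interior C = ∅) (hsub : C ⊆ Icc a b) (ha : a ∈ C) (hb : b ∈ C) :
    frontier (Ioo a b \ C) = C := by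
  have hclosure : closure (Ioo a b \ C) = Icc a b := by
    refine (closure_minimal (sdiff_subset.trans Ioo_subset_Icc_self) isClosed_Icc).antisymm ?_
    rw [← closure_Ioo hab.ne]
    exact closure_minimal ((interior_eq_empty_iff_dense_compl.1 hCi).open_subset_closure_inter
      isOpen_Ioo) isClosed_closure
  rw [(isOpen_Ioo.sdiff hC).frontier_eq, hclosure]
  ext x
  simp only [Set.mem_sdiff, mem_Icc, mem_Ioo, not_and, not_not]
  constructor
  · rintro ⟨⟨hax, hxb⟩, hx⟩
    rcases hax.eq_or_lt with rfl | hax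
    · exact ha
    rcases hxb.eq_or_lt with rfl | hxb
    · exact hb
    exact hx ⟨hax, hxb⟩
  · exact fun hx => ⟨hsub hx, fun _ => hx⟩

lemma volume_preimage_mul_left_sub {a : ℝ} (ha : a ≠ 0) (b : ℝ) (s : Set ℝ) :
    volume ((fun x => a * x - b) ⁻¹' s) = ENNReal.ofReal |a⁻¹| * volume s := by
  rw [show (fun x => a * x - b) ⁻¹' s = (a * ·) ⁻¹' ((· + -b) ⁻¹' s) by
      ext; simp [sub_eq_add_neg],
    Real.volume_preimage_mul_left ha, measure_preimage_add_right]

lemma measure_eq_inter_Iio_add_inter_Icc_add_inter_Ioi (μ : Measure ℝ) (s : Set ℝ) {a b : ℝ}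
    (hab : a ≤ b) : μ s = μ (s ∩ Iio a) + μ (s ∩ Icc a b) + μ (s ∩ Ioi b) := by
  rw [← measure_inter_add_sdiff s (measurableSet_Iio (a := a)),
    ← measure_inter_add_sdiff (s \ Iio a) (measurableSet_Iic (a := b)), add_assoc]
  congr 3 <;> ext x <;>
    simp only [mem_inter_iff, Set.mem_sdiff, mem_Iio, mem_Iic, mem_Icc, mem_Ioi, not_lt, not_le]
  · tauto
  · exact ⟨fun ⟨⟨h, _⟩, h'⟩ => ⟨h, h'⟩, fun ⟨h, h'⟩ => ⟨⟨h, by linarith⟩, h'⟩⟩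

lemma volume_Ioo_sdiff_Ioo {a b ε : ℝ} (hε : 0 ≤ ε) (h : a + ε ≤ b - ε) :
    volume (Ioo a b \ Ioo (a + ε) (b - ε)) = ENNReal.ofReal (2 * ε) := by
  rw [measure_sdiff (Ioo_subset_Ioo (by linarith) (by linarith))
      measurableSet_Ioo.nullMeasurableSet measure_Ioo_lt_top.ne, Real.volume_Ioo, Real.volume_Ioo,
    ← ENNReal.ofReal_sub _ (by linarith)]
  congr 1
  ring

lemma infDist_eq_infDist_three_mul_sub_div_three {s : Set ℝ} (hne : s.Nonempty) {x b : ℝ}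
    (hpre : ∀ y ∈ s, (y + b) / 3 ∈ s) (himg : ∀ c ∈ s, 3 * c - b ∈ s ∨ 1 / 3 ≤ dist x c)
    (hfar : infDist (3 * x - b) s ≤ 1) :
    infDist x s = infDist (3 * x - b) s / 3 := by
  have hdist : ∀ y, dist (3 * x - b) (3 * y - b) = 3 * dist x y := fun y => by
    rw [Real.dist_eq, Real.dist_eq, show 3 * x - b - (3 * y - b) = 3 * (x - y) by ring, abs_mul,
      abs_of_pos three_pos]
  apply le_antisymm
  · rw [le_div_iff₀ three_pos, mul_comm, le_infDist hne]
    intro y hy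
    calc 3 * infDist x s ≤ 3 * dist x ((y + b) / 3) := by
          gcongr; exact infDist_le_dist_of_mem (hpre y hy)
      _ = dist (3 * x - b) y := by rw [← hdist]; congr 1; ring
  · rw [le_infDist hne]
    intro c hc
    rcases himg c hc with h | h
    · calc infDist (3 * x - b) s / 3 ≤ dist (3 * x - b) (3 * c - b) / 3 := by
            gcongr; exact infDist_le_dist_of_mem h
        _ = dist x c := by rw [hdist]; ring
    · linarith

lemma fourierCoeffOn_cexp_mul {T : ℝ} (hT : 0 < T) {a : ℂ} {n : ℤ}
    (ha : a * T ≠ 2 * π * I * n) :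
    fourierCoeffOn hT (fun t : ℝ => cexp (a * t)) n =
      (cexp (a * T) - 1) / (a * T - 2 * π * I * n) := by
  have hT' : (T : ℂ) ≠ 0 := ofReal_ne_zero.2 hT.ne'
  set c : ℂ := a - 2 * π * I * n / T with hc
  have hc0 : c ≠ 0 := by
    rw [hc, sub_ne_zero]; rintro rfl; exact ha (by field_simp)
  have hcT : cexp (c * T) = cexp (a * T) := by
    rw [hc, sub_mul, div_mul_cancel₀ _ hT', exp_sub, show 2 * π * I * n = n * (2 * π * I) by ring,
      exp_int_mul_two_pi_mul_I, div_one]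
  rw [fourierCoeffOn_eq_integral, sub_zero]
  simp_rw [fourier_coe_apply, smul_eq_mul, ← exp_add]
  rw [intervalIntegral.integral_congr (g := fun x : ℝ => cexp (c * x)) fun x _ => by
      simp only [hc]; push_cast; ring_nf]
  rw [integral_exp_mul_complex hc0, hcT, ofReal_zero, mul_zero, exp_zero, real_smul]
  rw [hc]; push_cast
  field_simp

lemma fourierCoeffOn_add {a b : ℝ} (hab : a < b) {f g : ℝ → ℂ}
    (hf : IntervalIntegrable f volume a b) (hg : IntervalIntegrable g volume a b) (n : ℤ) :
    fourierCoeffOn hab (f + g) n = fourierCoeffOn hab f n + fourierCoeffOn hab g n := by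
  have hfour : Continuous fun x : ℝ => fourier (-n) (x : AddCircle (b - a)) :=
    (map_continuous _).comp continuous_quotient_mk'
  simp only [fourierCoeffOn_eq_integral, ← smul_add, Pi.add_apply, smul_eq_mul, mul_add]
  rw [intervalIntegral.integral_add (hf.continuousOn_mul hfour.continuousOn)
    (hg.continuousOn_mul hfour.continuousOn)]

lemma norm_one_div_sub_one_div_le (α β ω : ℝ) (hω : ω ≠ 0) :
    ‖1 / (α + ω * I) - 1 / (β + ω * I)‖ ≤ |α - β| / ω ^ 2 := by
  have hle : ∀ γ : ℝ, |ω| ≤ ‖(γ : ℂ) + ω * I‖ := fun γ => by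
    simpa using abs_im_le_norm ((γ : ℂ) + ω * I)
  have hne : ∀ γ : ℝ, (γ : ℂ) + ω * I ≠ 0 := fun γ h => by
    have := hle γ; rw [h, norm_zero] at this; exact hω (abs_nonpos_iff.1 this)
  rw [div_sub_div _ _ (hne α) (hne β), norm_div, norm_mul, one_mul, mul_one,
    show (β : ℂ) + ω * I - (α + ω * I) = ((β - α : ℝ) : ℂ) by push_cast; ring, norm_real,
    Real.norm_eq_abs, abs_sub_comm, ← sq_abs ω, sq]
  gcongr
  exacts [hle α, hle β]

lemma summable_one_div_sub_one_div (α β ω : ℝ) (hω : ω ≠ 0) :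
    Summable fun n : ℤ => 1 / (α + n * ω * I) - 1 / (β + n * ω * I) := by
  refine Summable.of_norm_bounded_eventually
    ((Real.summable_one_div_int_pow.2 one_lt_two).mul_left (|α - β| / ω ^ 2)) ?_
  filter_upwards [eventually_cofinite_ne 0] with n hn
  have hnω : (n : ℝ) * ω ≠ 0 := mul_ne_zero (Int.cast_ne_zero.2 hn) hω
  convert norm_one_div_sub_one_div_le α β (n * ω) hnω using 1
  · push_cast; ring_nf
  · field_simp

def cantorHutchinson (C : Set ℝ) : Set ℝ :=
  (fun x : ℝ => x / 3) '' C ∪ (fun x : ℝ => x / 3 + 2 / 3) '' C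

structure IsCantorAttractor (C : Set ℝ) : Prop where
  nonempty : C.Nonempty
  isCompact : IsCompact C
  eq_hutchinson : C = cantorHutchinson C

/-- The inner `ε`-tube `{x ∈ L | d(x, ∂L) ≤ ε}` of `L = (0,1) \ C`, with `∂L` replaced by `C`
(see `IsCantorAttractor.frontier_Ioo_sdiff_eq`). -/
def stringTube (C : Set ℝ) (ε : ℝ) : Set ℝ := {x ∈ Ioo 0 1 \ C | infDist x C ≤ ε}

namespace IsCantorAttractor

variable {C : Set ℝ} {x ε : ℝ}

lemma div_three_mem (hC : IsCantorAttractor C) (hx : x ∈ C) : x / 3 ∈ C := by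
  rw [hC.eq_hutchinson]; exact Or.inl ⟨x, hx, rfl⟩

lemma div_three_add_mem (hC : IsCantorAttractor C) (hx : x ∈ C) : x / 3 + 2 / 3 ∈ C := by
  rw [hC.eq_hutchinson]; exact Or.inr ⟨x, hx, rfl⟩

lemma three_mul_mem_or (hC : IsCantorAttractor C) (hx : x ∈ C) :
    3 * x ∈ C ∨ 3 * x - 2 ∈ C := by
  rw [hC.eq_hutchinson] at hx
  rcases hx with ⟨y, hy, rfl⟩ | ⟨y, hy, rfl⟩
  · left; convert hy using 1; ring
  · right; convert hy using 1; ring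

lemma isGreatest_one (hC : IsCantorAttractor C) : IsGreatest C 1 := by
  obtain ⟨M, hM, hMub⟩ := hC.isCompact.exists_isGreatest hC.nonempty
  have hge : M / 3 + 2 / 3 ≤ M := hMub (hC.div_three_add_mem hM)
  have hle : M ≤ 1 := by
    rcases hC.three_mul_mem_or hM with h | h <;> linarith [hMub h]
  obtain rfl : M = 1 := by linarith
  exact ⟨hM, hMub⟩

lemma isLeast_zero (hC : IsCantorAttractor C) : IsLeast C 0 := by
  obtain ⟨m, hm, hmlb⟩ := hC.isCompact.exists_isLeast hC.nonempty
  have hle : m ≤ m / 3 := hmlb (hC.div_three_mem hm)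
  have hge : 0 ≤ m := by
    rcases hC.three_mul_mem_or hm with h | h <;> linarith [hmlb h]
  obtain rfl : m = 0 := by linarith
  exact ⟨hm, hmlb⟩

lemma subset_Icc (hC : IsCantorAttractor C) : C ⊆ Icc 0 1 :=
  fun _ hx => ⟨hC.isLeast_zero.2 hx, hC.isGreatest_one.2 hx⟩

lemma one_third_mem (hC : IsCantorAttractor C) : (1 : ℝ) / 3 ∈ C :=
  hC.div_three_mem hC.isGreatest_one.1

lemma two_thirds_mem (hC : IsCantorAttractor C) : (2 : ℝ) / 3 ∈ C := by
  simpa using hC.div_three_add_mem hC.isLeast_zero.1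

lemma mem_iff_three_mul_mem (hC : IsCantorAttractor C) (hx : x ≤ 1 / 3) :
    x ∈ C ↔ 3 * x ∈ C := by
  refine ⟨fun h => ?_, fun h => by simpa using hC.div_three_mem h⟩
  rcases hC.three_mul_mem_or h with h' | h'
  · exact h'
  · linarith [(hC.subset_Icc h').1]

lemma mem_iff_three_mul_sub_mem (hC : IsCantorAttractor C) (hx : 2 / 3 ≤ x) :
    x ∈ C ↔ 3 * x - 2 ∈ C := by
  refine ⟨fun h => ?_, fun h => by convert hC.div_three_add_mem h using 1; ring⟩
  rcases hC.three_mul_mem_or h with h' | h'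
  · linarith [(hC.subset_Icc h').2]
  · exact h'

lemma le_or_le_of_mem (hC : IsCantorAttractor C) (hx : x ∈ C) : x ≤ 1 / 3 ∨ 2 / 3 ≤ x := by
  rcases hC.three_mul_mem_or hx with h | h
  · left; linarith [(hC.subset_Icc h).2]
  · right; linarith [(hC.subset_Icc h).1]

lemma volume_eq_zero (hC : IsCantorAttractor C) : volume C = 0 := by
  have hle : volume C ≤ ENNReal.ofReal (2 / 3) * volume C := by
    calc volume C ≤ volume ((3 * ·) ⁻¹' C) + volume ((fun x => 3 * x - 2) ⁻¹' C) :=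
          (measure_mono fun _ => hC.three_mul_mem_or).trans (measure_union_le _ _)
      _ = ENNReal.ofReal (2 / 3) * volume C := by
          rw [Real.volume_preimage_mul_left three_ne_zero,
            volume_preimage_mul_left_sub three_ne_zero, ← add_mul,
            ← ENNReal.ofReal_add (by positivity) (by positivity)]
          norm_num
  by_contra hne
  have hlt := ENNReal.mul_lt_mul_left hne hC.isCompact.measure_lt_top.ne
    (show ENNReal.ofReal (2 / 3) < 1 by norm_num)
  exact (hle.trans_lt (by simpa [mul_comm] using hlt)).false

lemma frontier_Ioo_sdiff_eq (hC : IsCantorAttractor C) : frontier (Ioo 0 1 \ C) = C :=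
  frontier_Ioo_sdiff one_pos hC.isCompact.isClosed
    (Measure.interior_eq_empty_of_null hC.volume_eq_zero) hC.subset_Icc hC.isLeast_zero.1
    hC.isGreatest_one.1

lemma infDist_le_one (hC : IsCantorAttractor C) (hx : x ∈ Icc 0 1) : infDist x C ≤ 1 :=
  (infDist_le_dist_of_mem hC.isLeast_zero.1).trans <| by
    rw [Real.dist_eq, sub_zero, abs_of_nonneg hx.1]; exact hx.2

lemma infDist_eq_infDist_three_mul_div_three (hC : IsCantorAttractor C)
    (hx : x ∈ Icc 0 (1 / 3)) : infDist x C = infDist (3 * x) C / 3 := by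
  refine (sub_zero (3 * x)) ▸ infDist_eq_infDist_three_mul_sub_div_three hC.nonempty
    (fun y hy => by simpa using hC.div_three_mem hy) (fun c hc => ?_)
    (by rw [sub_zero]; exact hC.infDist_le_one ⟨by linarith [hx.1], by linarith [hx.2]⟩)
  rcases hC.le_or_le_of_mem hc with h | h
  · exact Or.inl (by simpa using (hC.mem_iff_three_mul_mem h).1 hc)
  · exact Or.inr (by rw [Real.dist_eq, abs_sub_comm, abs_of_nonneg] <;> linarith [hx.2])

lemma infDist_eq_infDist_three_mul_sub_two_div_three (hC : IsCantorAttractor C)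
    (hx : x ∈ Icc (2 / 3) 1) : infDist x C = infDist (3 * x - 2) C / 3 := by
  refine infDist_eq_infDist_three_mul_sub_div_three hC.nonempty
    (fun y hy => by convert hC.div_three_add_mem hy using 1; ring) (fun c hc => ?_)
    (hC.infDist_le_one ⟨by linarith [hx.1], by linarith [hx.2]⟩)
  rcases hC.le_or_le_of_mem hc with h | h
  · exact Or.inr (by rw [Real.dist_eq, abs_of_nonneg] <;> linarith [hx.1])
  · exact Or.inl ((hC.mem_iff_three_mul_sub_mem h).1 hc)

lemma infDist_eq_min (hC : IsCantorAttractor C) (hx : x ∈ Icc (1 / 3) (2 / 3)) :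
    infDist x C = min (x - 1 / 3) (2 / 3 - x) := by
  apply le_antisymm
  · refine le_min ((infDist_le_dist_of_mem hC.one_third_mem).trans_eq ?_)
      ((infDist_le_dist_of_mem hC.two_thirds_mem).trans_eq ?_)
    · rw [Real.dist_eq, abs_of_nonneg (by linarith [hx.1])]
    · rw [Real.dist_eq, abs_of_nonpos (by linarith [hx.2])]; ring
  · rw [le_infDist hC.nonempty]
    intro c hc
    rw [Real.dist_eq]
    rcases hC.le_or_le_of_mem hc with h | h
    · exact (min_le_left _ _).trans ((by linarith : x - 1 / 3 ≤ x - c).trans (le_abs_self _))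
    · exact (min_le_right _ _).trans ((by linarith : 2 / 3 - x ≤ -(x - c)).trans (neg_le_abs _))

lemma infDist_le_one_sixth (hC : IsCantorAttractor C) (hx : x ∈ Icc 0 1) :
    infDist x C ≤ 1 / 6 := by
  obtain ⟨x₀, hx₀, hmax⟩ := isCompact_Icc.exists_isMaxOn (nonempty_Icc.2 zero_le_one)
    (continuous_infDist_pt C).continuousOn
  suffices infDist x₀ C ≤ 1 / 6 from (hmax hx).trans this
  rcases le_or_gt x₀ (1 / 3) with h₁ | h₁
  · have h := hC.infDist_eq_infDist_three_mul_div_three ⟨hx₀.1, h₁⟩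
    have hle : infDist (3 * x₀) C ≤ infDist x₀ C := hmax ⟨by linarith [hx₀.1], by linarith⟩
    linarith [infDist_nonneg (x := x₀) (s := C)]
  rcases le_or_gt x₀ (2 / 3) with h₂ | h₂
  · rw [hC.infDist_eq_min ⟨h₁.le, h₂⟩, min_le_iff]
    by_contra! h
    linarith [h.1, h.2]
  · have h := hC.infDist_eq_infDist_three_mul_sub_two_div_three ⟨h₂.le, hx₀.2⟩
    have hle : infDist (3 * x₀ - 2) C ≤ infDist x₀ C := hmax ⟨by linarith, by linarith [hx₀.2]⟩
    linarith [infDist_nonneg (x := x₀) (s := C)]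

lemma stringTube_inter_Iio (hC : IsCantorAttractor C) :
    stringTube C ε ∩ Iio (1 / 3) = (3 * ·) ⁻¹' stringTube C (3 * ε) := by
  ext x
  simp only [stringTube, mem_inter_iff, mem_ofPred_eq, mem_preimage, Set.mem_sdiff, mem_Ioo,
    mem_Iio]
  constructor
  · rintro ⟨⟨⟨⟨h0, -⟩, hxC⟩, hd⟩, h13⟩
    rw [hC.infDist_eq_infDist_three_mul_div_three ⟨h0.le, h13.le⟩] at hd
    exact ⟨⟨⟨by linarith, by linarith⟩, (hC.mem_iff_three_mul_mem h13.le).not.1 hxC⟩,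
      by linarith⟩
  · rintro ⟨⟨⟨h0, h1⟩, hxC⟩, hd⟩
    have hx : x ∈ Icc (0 : ℝ) (1 / 3) := ⟨by linarith, by linarith⟩
    rw [← hC.mem_iff_three_mul_mem hx.2] at hxC
    refine ⟨⟨⟨⟨by linarith, by linarith⟩, hxC⟩, ?_⟩, by linarith⟩
    rw [hC.infDist_eq_infDist_three_mul_div_three hx]; linarith

lemma stringTube_inter_Ioi (hC : IsCantorAttractor C) :
    stringTube C ε ∩ Ioi (2 / 3) = (fun x => 3 * x - 2) ⁻¹' stringTube C (3 * ε) := by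
  ext x
  simp only [stringTube, mem_inter_iff, mem_ofPred_eq, mem_preimage, Set.mem_sdiff, mem_Ioo,
    mem_Ioi]
  constructor
  · rintro ⟨⟨⟨⟨-, h1⟩, hxC⟩, hd⟩, h23⟩
    rw [hC.infDist_eq_infDist_three_mul_sub_two_div_three ⟨h23.le, h1.le⟩] at hd
    exact ⟨⟨⟨by linarith, by linarith⟩, (hC.mem_iff_three_mul_sub_mem h23.le).not.1 hxC⟩,
      by linarith⟩
  · rintro ⟨⟨⟨h0, h1⟩, hxC⟩, hd⟩
    have hx : x ∈ Icc (2 / 3 : ℝ) 1 := ⟨by linarith, by linarith⟩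
    rw [← hC.mem_iff_three_mul_sub_mem hx.1] at hxC
    refine ⟨⟨⟨⟨by linarith, by linarith⟩, hxC⟩, ?_⟩, by linarith⟩
    rw [hC.infDist_eq_infDist_three_mul_sub_two_div_three hx]; linarith

lemma stringTube_inter_Icc (hC : IsCantorAttractor C) :
    stringTube C ε ∩ Icc (1 / 3) (2 / 3) = Ioo (1 / 3) (2 / 3) \ Ioo (1 / 3 + ε) (2 / 3 - ε) := by
  ext x
  simp only [stringTube, mem_inter_iff, mem_ofPred_eq, Set.mem_sdiff, mem_Ioo, mem_Icc]
  constructor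
  · rintro ⟨⟨⟨-, hxC⟩, hd⟩, h1, h2⟩
    rw [hC.infDist_eq_min ⟨h1, h2⟩, min_le_iff] at hd
    have h1 : 1 / 3 < x := h1.lt_of_ne fun h => hxC (h ▸ hC.one_third_mem)
    have h2 : x < 2 / 3 := h2.lt_of_ne fun h => hxC (h ▸ hC.two_thirds_mem)
    refine ⟨⟨h1, h2⟩, fun ⟨h1', h2'⟩ => ?_⟩
    rcases hd with hd | hd <;> linarith
  · rintro ⟨⟨h1, h2⟩, hn⟩
    have hxC : x ∉ C := fun hx => by rcases hC.le_or_le_of_mem hx with h | h <;> linarith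
    refine ⟨⟨⟨⟨by linarith, by linarith⟩, hxC⟩, ?_⟩, h1.le, h2.le⟩
    rw [hC.infDist_eq_min ⟨h1.le, h2.le⟩, min_le_iff]
    by_contra! h
    exact hn ⟨by linarith [h.1], by linarith [h.2]⟩

lemma volume_stringTube_eq_add (hC : IsCantorAttractor C) (hε₀ : 0 ≤ ε) (hε : ε ≤ 1 / 6) :
    volume (stringTube C ε) =
      ENNReal.ofReal (2 * ε) + ENNReal.ofReal (2 / 3) * volume (stringTube C (3 * ε)) := by
  rw [measure_eq_inter_Iio_add_inter_Icc_add_inter_Ioi volume _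
      (by norm_num : (1 : ℝ) / 3 ≤ 2 / 3),
    hC.stringTube_inter_Iio, hC.stringTube_inter_Icc, hC.stringTube_inter_Ioi,
    Real.volume_preimage_mul_left three_ne_zero, volume_preimage_mul_left_sub three_ne_zero,
    volume_Ioo_sdiff_Ioo hε₀ (by linarith),
    show ENNReal.ofReal (2 / 3) = ENNReal.ofReal |3⁻¹| + ENNReal.ofReal |3⁻¹| by
      rw [← ENNReal.ofReal_add (by positivity) (by positivity)]; norm_num]
  ring

lemma volume_stringTube_of_one_sixth_le (hC : IsCantorAttractor C) (hε : 1 / 6 ≤ ε) :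
    volume (stringTube C ε) = 1 := by
  have htube : stringTube C ε = Ioo 0 1 \ C :=
    sep_eq_self_iff_mem_true.2 fun _ hx =>
      (hC.infDist_le_one_sixth (Ioo_subset_Icc_self hx.1)).trans hε
  rw [htube, measure_sdiff_null hC.volume_eq_zero, Real.volume_Ioo, sub_zero, ENNReal.ofReal_one]

lemma volume_stringTube_of_pow_lt (hC : IsCantorAttractor C) (k : ℕ)
    (hlo : (1 / 3 : ℝ) ^ (k + 1) < 2 * ε) (hhi : 2 * ε ≤ (1 / 3) ^ k) :
    volume (stringTube C ε) = ENNReal.ofReal (2 * ε * (2 ^ k - 1) + (2 / 3) ^ k) := by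
  induction k generalizing ε with
  | zero =>
    rw [hC.volume_stringTube_of_one_sixth_le (by norm_num at hlo; linarith)]
    norm_num
  | succ k ih =>
    have hpow : (1 / 3 : ℝ) ^ (k + 1) ≤ 1 / 3 :=
      pow_le_of_le_one (by norm_num) (by norm_num) k.succ_ne_zero
    have hε₀ : 0 ≤ ε := by linarith [pow_pos (by norm_num : (0 : ℝ) < 1 / 3) (k + 2)]
    have h2k : (1 : ℝ) ≤ 2 ^ k := one_le_pow₀ (by norm_num)
    rw [hC.volume_stringTube_eq_add hε₀ (by linarith),
      ih (by rw [pow_succ] at hlo; linarith) (by rw [pow_succ] at hhi; linarith),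
      ← ENNReal.ofReal_mul (by norm_num), ← ENNReal.ofReal_add (by linarith)
        (mul_nonneg (by norm_num) (add_nonneg (by nlinarith) (by positivity)))]
    congr 1
    ring

end IsCantorAttractor

noncomputable def cantorDim : ℝ := Real.log 2 / Real.log 3

lemma cantorDim_mul_log_three : cantorDim * Real.log 3 = Real.log 2 :=
  div_mul_cancel₀ _ (Real.log_pos (by norm_num)).ne'

lemma cantorDim_pos : 0 < cantorDim :=
  div_pos (Real.log_pos one_lt_two) (Real.log_pos (by norm_num))

lemma cantorDim_lt_one : cantorDim < 1 :=
  (div_lt_one (Real.log_pos (by norm_num))).2 (Real.log_lt_log two_pos (by norm_num))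

noncomputable def cantorProfile (t : ℝ) : ℂ :=
  cexp (-cantorDim * t) + cexp ((1 - cantorDim) * t)

lemma cexp_neg_cantorDim_mul_log_three : cexp (-cantorDim * Real.log 3) = 1 / 2 := by
  rw [show -(cantorDim : ℂ) * Real.log 3 = ((-Real.log 2 : ℝ) : ℂ) by
      push_cast [← cantorDim_mul_log_three]; ring,
    ← ofReal_exp, Real.exp_neg, Real.exp_log two_pos]
  norm_num

lemma cexp_one_sub_cantorDim_mul_log_three :
    cexp ((1 - cantorDim) * Real.log 3) = 3 / 2 := by
  rw [show (1 - (cantorDim : ℂ)) * Real.log 3 = ((Real.log 3 - Real.log 2 : ℝ) : ℂ) by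
      push_cast [← cantorDim_mul_log_three]; ring,
    ← ofReal_exp, Real.exp_sub, Real.exp_log two_pos, Real.exp_log three_pos]
  norm_num

instance : Fact (0 < Real.log 3) := ⟨Real.log_pos (by norm_num)⟩

noncomputable def cantorProfileCircle : C(AddCircle (Real.log 3), ℂ) :=
  ⟨AddCircle.liftIco _ 0 cantorProfile, AddCircle.liftIco_zero_continuous
    (by simp only [cantorProfile, cexp_neg_cantorDim_mul_log_three,
      cexp_one_sub_cantorDim_mul_log_three, ofReal_zero, mul_zero, exp_zero]; norm_num)
    (by unfold cantorProfile; fun_prop)⟩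

lemma cantorProfileCircle_coe_add_nat_mul {t : ℝ} (ht : t ∈ Ico 0 (Real.log 3)) (k : ℕ) :
    cantorProfileCircle (t + k * Real.log 3 : ℝ) = cantorProfile t := by
  rw [AddCircle.coe_add, ← nsmul_eq_mul, AddCircle.coe_nsmul, AddCircle.coe_period, smul_zero,
    add_zero]
  exact AddCircle.liftIco_zero_coe_apply (f := cantorProfile) ht

lemma fourierCoeff_cantorProfileCircle (n : ℤ) :
    fourierCoeff cantorProfileCircle n = 1 / (2 * Real.log 3) *
      (1 / (cantorDim + I * n * (2 * π / Real.log 3 : ℝ)) -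
        1 / (cantorDim - 1 + I * n * (2 * π / Real.log 3 : ℝ))) := by
  have hT : (0 : ℝ) < Real.log 3 := Fact.out
  have hT' : (Real.log 3 : ℂ) ≠ 0 := ofReal_ne_zero.2 hT.ne'
  have hre : ∀ x : ℝ, x ≠ 0 → (x : ℂ) ≠ 2 * π * I * n := fun x hx h =>
    hx (by simpa using congrArg re h)
  have hcoeff := fourierCoeffOn_add hT (f := fun t : ℝ => cexp (-cantorDim * t))
    (g := fun t : ℝ => cexp ((1 - cantorDim) * t))
    ((by fun_prop : Continuous _).intervalIntegrable _ _)
    ((by fun_prop : Continuous _).intervalIntegrable _ _) n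
  rw [fourierCoeffOn_cexp_mul hT
      (by exact_mod_cast hre _ (mul_ne_zero (neg_ne_zero.2 cantorDim_pos.ne') hT.ne')),
    fourierCoeffOn_cexp_mul hT
      (by exact_mod_cast hre _ (mul_ne_zero (sub_ne_zero.2 cantorDim_lt_one.ne') hT.ne')),
    cexp_neg_cantorDim_mul_log_three, cexp_one_sub_cantorDim_mul_log_three] at hcoeff
  rw [cantorProfileCircle, ContinuousMap.coe_mk, fourierCoeff_liftIco_eq]
  simp only [zero_add]
  rw [show cantorProfile = (fun t : ℝ => cexp (-cantorDim * t)) +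
    fun t : ℝ => cexp ((1 - cantorDim) * t) from rfl, hcoeff]
  set A : ℂ := cantorDim + I * n * (2 * π / Real.log 3 : ℝ)
  set B : ℂ := cantorDim - 1 + I * n * (2 * π / Real.log 3 : ℝ)
  have hA : A ≠ 0 := fun h => cantorDim_pos.ne' (by simpa [A, -ofReal_div] using congrArg re h)
  have hB : B ≠ 0 := fun h =>
    sub_ne_zero.2 cantorDim_lt_one.ne (by simpa [B, -ofReal_div] using congrArg re h)
  rw [show -(cantorDim : ℂ) * Real.log 3 - 2 * π * I * n = -Real.log 3 * A by
      simp only [A]; push_cast; field_simp; ring,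
    show (1 - (cantorDim : ℂ)) * Real.log 3 - 2 * π * I * n = -Real.log 3 * B by
      simp only [B]; push_cast; field_simp; ring]
  field_simp
  ring

lemma summable_fourierCoeff_cantorProfileCircle :
    Summable (fourierCoeff cantorProfileCircle) := by
  have hω : 2 * π / Real.log 3 ≠ 0 :=
    div_ne_zero (by positivity) (Real.log_pos (by norm_num)).ne'
  rw [funext fourierCoeff_cantorProfileCircle]
  refine ((summable_one_div_sub_one_div cantorDim (cantorDim - 1) _ hω).mul_left
    (1 / (2 * Real.log 3 : ℂ))).congr fun n => ?_
  push_cast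
  ring_nf

lemma hasSum_cantorProfileCircle (u : ℝ) :
    HasSum (fun n : ℤ => (1 / ((cantorDim : ℂ) + I * n * (2 * π / Real.log 3 : ℝ)) -
        1 / ((cantorDim : ℂ) - 1 + I * n * (2 * π / Real.log 3 : ℝ))) *
        cexp ((1 - (cantorDim : ℂ) - I * n * (2 * π / Real.log 3 : ℝ)) * u))
      (2 * Real.log 3 * cexp ((1 - cantorDim) * u) * cantorProfileCircle (-u : ℝ)) := by
  have hT' : (Real.log 3 : ℂ) ≠ 0 := ofReal_ne_zero.2 (Real.log_pos (by norm_num)).ne'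
  refine ((has_pointwise_sum_fourier_series_of_summable summable_fourierCoeff_cantorProfileCircle
    ((-u : ℝ) : AddCircle (Real.log 3))).mul_left
      (2 * Real.log 3 * cexp ((1 - cantorDim) * u))).congr_fun fun n => ?_
  rw [fourierCoeff_cantorProfileCircle, fourier_coe_apply, smul_eq_mul,
    show (1 - (cantorDim : ℂ) - I * n * (2 * π / Real.log 3 : ℝ)) * u =
      (1 - cantorDim) * u + 2 * π * I * n * (-u : ℝ) / Real.log 3 by push_cast; field_simp; ring,
    exp_add]
  field_simp

lemma IsCantorAttractor.volume_stringTube_add_eq_cantorProfileCircle {C : Set ℝ} {ε : ℝ}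
    (hC : IsCantorAttractor C) (hε₀ : 0 < ε) (hε : ε ≤ 1 / 6) :
    (((volume (stringTube C ε)).toReal + 2 * ε : ℝ) : ℂ) = 2 / 3 *
      cexp ((1 - cantorDim) * Real.log (6 * ε)) * cantorProfileCircle (-Real.log (6 * ε) : ℝ) := by
  obtain ⟨k, hlo, hhi⟩ := exists_nat_pow_near_of_lt_one (x := 6 * ε) (y := 1 / 3) (by positivity)
    (by linarith) (by norm_num) (by norm_num)
  have hlog : ∀ m : ℕ, Real.log ((1 / 3) ^ m) = -(m * Real.log 3) := fun m => by
    rw [Real.log_pow, one_div, Real.log_inv, mul_neg]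
  set u := Real.log (6 * ε)
  have hu_lo : -((k + 1 : ℕ) * Real.log 3) < u :=
    hlog (k + 1) ▸ Real.log_lt_log (by positivity) hlo
  have hu_hi : u ≤ -(k * Real.log 3) := hlog k ▸ Real.log_le_log (by positivity) hhi
  set t := -u - k * Real.log 3 with ht
  have htmem : t ∈ Ico 0 (Real.log 3) := ⟨by linarith, by push_cast at hu_lo; linarith⟩
  have hexp₁ : Real.exp ((1 - cantorDim) * u) * Real.exp (-cantorDim * t) = 6 * ε * 2 ^ k := by
    rw [← Real.exp_add, show (1 - cantorDim) * u + -cantorDim * t = u + k * Real.log 2 by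
      rw [ht, ← cantorDim_mul_log_three]; ring, Real.exp_add, Real.exp_log (by positivity),
      ← Real.log_pow, Real.exp_log (by positivity)]
  have hexp₂ :
      Real.exp ((1 - cantorDim) * u) * Real.exp ((1 - cantorDim) * t) = (2 / 3) ^ k := by
    rw [← Real.exp_add, show (1 - cantorDim) * u + (1 - cantorDim) * t =
        k * Real.log 2 - k * Real.log 3 by rw [ht, ← cantorDim_mul_log_three]; ring,
      ← Real.log_pow, ← Real.log_pow, ← Real.log_div (by positivity) (by positivity),
      Real.exp_log (by positivity), div_pow]
  have h2k : (1 : ℝ) ≤ 2 ^ (k + 1) := one_le_pow₀ (by norm_num)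
  rw [show -u = t + k * Real.log 3 by ring, cantorProfileCircle_coe_add_nat_mul htmem,
    hC.volume_stringTube_of_pow_lt (k + 1) (by rw [pow_succ]; linarith)
      (by rw [pow_succ]; linarith),
    ENNReal.toReal_ofReal (add_nonneg (mul_nonneg (by positivity) (by linarith)) (by positivity))]
  have key : 2 * ε * (2 ^ (k + 1) - 1) + (2 / 3) ^ (k + 1) + 2 * ε = 2 / 3 *
      (rexp ((1 - cantorDim) * u) * rexp (-cantorDim * t) +
        rexp ((1 - cantorDim) * u) * rexp ((1 - cantorDim) * t)) := by
    rw [hexp₁, hexp₂]; ring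
  rw [key, cantorProfile]
  push_cast
  ring

/-- Tube formula for the Cantor string `L = (0,1) \ C`, with
`D = log 2 / log 3`, `p = 2π / log 3`, `g = 1/6`.  For every `0 < ε ≤ 1/6`, the
symmetric partial sums
`∑_{n=−N}^{N} (1/(D+inp) − 1/(D−1+inp)) (ε/g)^{1−D−inp}` converge as `N → ∞`, and
`V_L(ε) = (1/(3 log 3)) · lim − 2ε`, where `(ε/g)^z := exp(z · log(ε/g))` with the
real logarithm. -/
theorem stmt_5 (C : Set ℝ)
    (hCne : C.Nonempty) (hCc : IsCompact C)
    (hC : C = (fun x : ℝ => x / 3) '' C ∪ (fun x : ℝ => x / 3 + 2 / 3) '' C)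
    (L : Set ℝ) (hL : L = Set.Ioo (0 : ℝ) 1 \ C)
    (D p g : ℝ) (hD : D = Real.log 2 / Real.log 3)
    (hp : p = 2 * Real.pi / Real.log 3) (hg : g = 1 / 6) :
    ∀ ε : ℝ, 0 < ε → ε ≤ 1 / 6 →
      ∃ S : ℂ,
        Tendsto
          (fun N : ℕ => ∑ n ∈ Finset.Icc (-(N : ℤ)) (N : ℤ),
            ((1 / ((D : ℂ) + Complex.I * n * p) - 1 / ((D : ℂ) - 1 + Complex.I * n * p))
              * Complex.exp ((1 - (D : ℂ) - Complex.I * n * p) * (Real.log (ε / g) : ℂ))))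
          atTop (nhds S) ∧
        ((volume {x ∈ L | infDist x (frontier L) ≤ ε}).toReal : ℂ)
          = (1 / (3 * Real.log 3) : ℝ) * S - 2 * (ε : ℂ) := by
  intro ε hε hε6
  have hCantor : IsCantorAttractor C := ⟨hCne, hCc, hC⟩
  obtain rfl : D = cantorDim := hD
  subst hp hg hL
  rw [show ε / (1 / 6) = 6 * ε by ring]
  refine ⟨_, (hasSum_cantorProfileCircle _).comp Finset.tendsto_Icc_neg, ?_⟩
  rw [hCantor.frontier_Ioo_sdiff_eq]
  change ((volume (stringTube C ε)).toReal : ℂ) = _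
  have hT : (Real.log 3 : ℂ) ≠ 0 := ofReal_ne_zero.2 (Real.log_pos (by norm_num)).ne'
  have h := hCantor.volume_stringTube_add_eq_cantorProfileCircle hε hε6
  push_cast at h ⊢
  linear_combination (norm := skip) h
  field_simp
  ring
end

section
/- Let F ⊆ ℝ^d be the attractor of a self-similar system Φ. If there exists ε > 0 such that the closed ε-neighbourhood {x ∈ ℝ^d : dist(x, F) ≤ ε} is a finite union of convex sets, then for every ε > 0 the set {x ∈ ℝ^d : dist(x, F) ≤ ε} is a finite union of convex sets. -/
open Metric Set Pointwise

variable {X : Type*} [NormedAddCommGroup X] [NormedSpace ℝ X]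

/-- "finite union of convex sets" -/
def FUC (S : Set X) : Prop :=
  ∃ T : Set (Set X), T.Finite ∧ (∀ C ∈ T, Convex ℝ C) ∧ S = ⋃₀ T

lemma fuc_iff_fin (S : Set X) :
    FUC S ↔ ∃ (n : ℕ) (Cv : Fin n → Set X), (∀ i, Convex ℝ (Cv i)) ∧ S = ⋃ i, Cv i := by
  constructor
  · rintro ⟨T, hTfin, hTconv, rfl⟩
    haveI := hTfin.fintype
    refine ⟨Fintype.card T, fun i => ((Fintype.equivFin T).symm i : Set X), ?_, ?_⟩
    · intro i; exact hTconv _ ((Fintype.equivFin T).symm i).2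
    · ext x
      simp only [mem_sUnion, mem_iUnion]
      constructor
      · rintro ⟨C, hC, hx⟩; exact ⟨Fintype.equivFin T ⟨C, hC⟩, by simpa using hx⟩
      · rintro ⟨i, hx⟩; exact ⟨_, ((Fintype.equivFin T).symm i).2, hx⟩
  · rintro ⟨n, Cv, hconv, rfl⟩
    exact ⟨range Cv, finite_range Cv, by rintro C ⟨i, rfl⟩; exact hconv i, (sUnion_range Cv).symm⟩

lemma fuc_iUnion {ι : Type*} [Finite ι] {s : ι → Set X} (h : ∀ j, FUC (s j)) :
    FUC (⋃ j, s j) := by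
  choose T hfin hconv heq using h
  refine ⟨⋃ j, T j, Set.finite_iUnion hfin, ?_, ?_⟩
  · rintro C hC; rw [mem_iUnion] at hC; obtain ⟨j, hj⟩ := hC; exact hconv j C hj
  · rw [sUnion_iUnion]; exact iUnion_congr heq

lemma fuc_image (f : X →ₗ[ℝ] X) (b : X) {S : Set X} (h : FUC S) :
    FUC ((fun x => f x + b) '' S) := by
  obtain ⟨T, hfin, hconv, rfl⟩ := h
  refine ⟨(fun C => (fun x => f x + b) '' C) '' T, hfin.image _, ?_, ?_⟩
  · rintro C ⟨C', hC', rfl⟩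
    show Convex ℝ ((fun x => f x + b) '' C')
    have : (fun x => f x + b) '' C' = (fun x => b + x) '' (f '' C') := by
      ext y
      simp only [mem_image, exists_exists_and_eq_and]
      constructor
      · rintro ⟨x, hx, rfl⟩; exact ⟨x, hx, (add_comm _ _)⟩
      · rintro ⟨x, hx, rfl⟩; exact ⟨x, hx, (add_comm _ _)⟩
    rw [this]
    exact ((hconv C' hC').linear_image f).translate b
  · exact image_sUnion

/-- membership in Minkowski sum with closed ball -/
lemma mem_add_cball {C : Set X} {δ : ℝ} {x : X} :
    x ∈ C + closedBall (0 : X) δ ↔ ∃ y ∈ C, dist x y ≤ δ := by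
  simp only [Set.mem_add, mem_closedBall_zero_iff]
  constructor
  · rintro ⟨y, hy, b, hb, rfl⟩
    exact ⟨y, hy, by simpa [dist_eq_norm] using hb⟩
  · rintro ⟨y, hy, hd⟩
    exact ⟨y, hy, x - y, by simpa [dist_eq_norm] using hd, by abel⟩

/-- enlarging the neighbourhood keeps FUC -/
lemma fuc_enlarge {F : Set X} (hFne : F.Nonempty) (hFc : IsCompact F)
    {ε' ε : ℝ} (hε' : 0 < ε') (hle : ε' ≤ ε)
    (h : FUC {x : X | infDist x F ≤ ε'}) : FUC {x : X | infDist x F ≤ ε} := by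
  obtain ⟨T, hfin, hconv, heq⟩ := h
  refine ⟨(fun C => C + closedBall (0 : X) (ε - ε')) '' T, hfin.image _, ?_, ?_⟩
  · rintro C ⟨C', hC', rfl⟩
    exact (hconv C' hC').add (convex_closedBall _ _)
  · ext x
    simp only [mem_setOf_eq, sUnion_image, mem_iUnion]
    constructor
    · intro hx
      -- find y with infDist y F ≤ ε' and dist x y ≤ ε - ε'
      obtain ⟨z, hz, hdz⟩ := hFc.exists_infDist_eq_dist hFne x
      rw [hdz] at hx
      have key : ∃ y : X, infDist y F ≤ ε' ∧ dist x y ≤ ε - ε' := by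
        by_cases hc : dist x z ≤ ε'
        · exact ⟨x, le_trans (infDist_le_dist_of_mem hz) hc, by simp [sub_nonneg.2 hle]⟩
        · push_neg at hc
          set D := dist x z with hD
          have hD0 : 0 < D := lt_trans hε' hc
          set t := ε' / D with ht
          have ht0 : 0 < t := div_pos hε' hD0
          have ht1 : t ≤ 1 := (div_le_one hD0).2 hc.le
          refine ⟨z + t • (x - z), ?_, ?_⟩
          · refine le_trans (infDist_le_dist_of_mem hz) ?_
            have : dist (z + t • (x - z)) z = t * D := by
              rw [dist_eq_norm]
              simp [norm_smul, abs_of_pos ht0, hD, dist_eq_norm]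
            rw [this, ht, div_mul_cancel₀ _ hD0.ne']
          · have hxy : x - (z + t • (x - z)) = (1 - t) • (x - z) := by
              rw [sub_smul, one_smul]; abel
            rw [dist_eq_norm, hxy, norm_smul, Real.norm_eq_abs,
              abs_of_nonneg (by linarith : (0:ℝ) ≤ 1 - t), ← dist_eq_norm, ← hD]
            have htD : t * D = ε' := by rw [ht]; field_simp
            nlinarith
      obtain ⟨y, hy1, hy2⟩ := key
      have : y ∈ ⋃₀ T := by rw [← heq]; exact hy1
      obtain ⟨C, hC, hyC⟩ := this
      exact ⟨C, hC, mem_add_cball.2 ⟨y, hyC, hy2⟩⟩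
    · rintro ⟨C, hC, hx⟩
      obtain ⟨y, hyC, hd⟩ := mem_add_cball.1 hx
      have hy : infDist y F ≤ ε' := by
        have : y ∈ ⋃₀ T := ⟨C, hC, hyC⟩
        rw [← heq] at this; exact this
      calc infDist x F ≤ infDist y F + dist x y := infDist_le_infDist_add_dist
        _ ≤ ε' + (ε - ε') := add_le_add hy hd
        _ = ε := by ring

lemma nbd_image {f : X → X} {c : ℝ} (hc : 0 < c)
    (hdist : ∀ x y, dist (f x) (f y) = c * dist x y) (hsurj : Function.Surjective f)
    {F : Set X} (hFne : F.Nonempty) (hFc : IsCompact F) (ε : ℝ) :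
    {x : X | infDist x (f '' F) ≤ c * ε} = f '' {x : X | infDist x F ≤ ε} := by
  have hlip : LipschitzWith ⟨c, hc.le⟩ f :=
    LipschitzWith.of_dist_le_mul fun x y => le_of_eq (hdist x y)
  have hcomp : IsCompact (f '' F) := hFc.image hlip.continuous
  ext x
  simp only [mem_setOf_eq, mem_image]
  constructor
  · intro hx
    obtain ⟨w, hw, rfl⟩ := hsurj x
    obtain ⟨z, hz, hdz⟩ := hcomp.exists_infDist_eq_dist (hFne.image f) (f w)
    obtain ⟨u, hu, rfl⟩ := hz
    refine ⟨w, ?_, rfl⟩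
    have h1 : c * dist w u ≤ c * ε := by rw [← hdist]; rw [hdz] at hx; exact hx
    have h2 : dist w u ≤ ε := le_of_mul_le_mul_left h1 hc
    exact le_trans (infDist_le_dist_of_mem hu) h2
  · rintro ⟨y, hy, rfl⟩
    obtain ⟨z, hz, hdz⟩ := hFc.exists_infDist_eq_dist hFne y
    calc infDist (f y) (f '' F) ≤ dist (f y) (f z) := infDist_le_dist_of_mem ⟨z, hz, rfl⟩
      _ = c * dist y z := hdist y z
      _ ≤ c * ε := mul_le_mul_of_nonneg_left (hdz ▸ hy) hc.le

lemma nbd_decompose {ι : Type*} {G : ι → Set X} {F : Set X}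
    (hFc : IsCompact F) (hFne : F.Nonempty) (hunion : F = ⋃ j, G j)
    (hGne : ∀ j, (G j).Nonempty) (δ : ℝ) :
    {x : X | infDist x F ≤ δ} = ⋃ j, {x : X | infDist x (G j) ≤ δ} := by
  ext x
  simp only [mem_setOf_eq, mem_iUnion]
  constructor
  · intro hx
    obtain ⟨z, hz, hdz⟩ := hFc.exists_infDist_eq_dist hFne x
    rw [hunion, mem_iUnion] at hz
    obtain ⟨j, hj⟩ := hz
    exact ⟨j, le_trans (infDist_le_dist_of_mem hj) (hdz ▸ hx)⟩
  · rintro ⟨j, hj⟩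
    have hsub : G j ⊆ F := hunion ▸ subset_iUnion G j
    exact le_trans (infDist_le_infDist_of_subset hsub (hGne j)) hj

open Metric

/-- Let `F ⊆ ℝ^d` be the attractor of a self-similar system `Φ`.
If there exists `ε > 0` such that the closed `ε`-neighbourhood
`{x : dist(x,F) ≤ ε}` is a finite union of convex sets, then for every `ε > 0`
the set `{x : dist(x,F) ≤ ε}` is a finite union of convex sets. -/
theorem stmt_8 (d J : ℕ) (hd : 1 ≤ d) (hJ : 2 ≤ J)
    (r : Fin J → ℝ) (hr : ∀ j, r j ∈ Set.Ioo (0 : ℝ) 1)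
    (A : Fin J → (EuclideanSpace ℝ (Fin d) ≃ₗᵢ[ℝ] EuclideanSpace ℝ (Fin d)))
    (a : Fin J → EuclideanSpace ℝ (Fin d))
    (φ : Fin J → EuclideanSpace ℝ (Fin d) → EuclideanSpace ℝ (Fin d))
    (hφ : ∀ j x, φ j x = r j • (A j x) + a j)
    (F : Set (EuclideanSpace ℝ (Fin d)))
    (hFne : F.Nonempty) (hFc : IsCompact F) (hF : F = ⋃ j, φ j '' F)
    (hex : ∃ ε : ℝ, 0 < ε ∧ ∃ (n : ℕ) (Cv : Fin n → Set (EuclideanSpace ℝ (Fin d))),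
      (∀ i, Convex ℝ (Cv i)) ∧ {x | infDist x F ≤ ε} = ⋃ i, Cv i) :
    ∀ ε : ℝ, 0 < ε → ∃ (n : ℕ) (Cv : Fin n → Set (EuclideanSpace ℝ (Fin d))),
      (∀ i, Convex ℝ (Cv i)) ∧ {x | infDist x F ≤ ε} = ⋃ i, Cv i := by
  obtain ⟨ε₀, hε₀, hfin0⟩ := hex
  have h0 : FUC {x | infDist x F ≤ ε₀} := (fuc_iff_fin _).2 hfin0
  have hJ0 : 0 < J := lt_of_lt_of_le two_pos hJ
  haveI : Nonempty (Fin J) := ⟨⟨0, hJ0⟩⟩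
  -- the maximal contraction ratio
  set ρ : ℝ := Finset.univ.sup' Finset.univ_nonempty r with hρdef
  have hrρ : ∀ j, r j ≤ ρ := fun j => Finset.le_sup' r (Finset.mem_univ j)
  obtain ⟨j₀, -, hj₀⟩ := Finset.exists_mem_eq_sup' Finset.univ_nonempty r
  have hρ0 : 0 < ρ := by rw [hρdef, hj₀]; exact (hr j₀).1
  have hρ1 : ρ < 1 := by rw [hρdef, hj₀]; exact (hr j₀).2
  -- distance scaling of the similitudes
  have hdist : ∀ j x y, dist (φ j x) (φ j y) = r j * dist x y := by
    intro j x y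
    rw [dist_eq_norm, dist_eq_norm, hφ, hφ]
    have : r j • A j x + a j - (r j • A j y + a j) = r j • (A j (x - y)) := by
      rw [map_sub, smul_sub]; abel
    rw [this, norm_smul, (A j).norm_map, Real.norm_eq_abs, abs_of_pos (hr j).1]
  -- surjectivity of the similitudes
  have hsurj : ∀ j, Function.Surjective (φ j) := by
    intro j x
    refine ⟨(A j).symm ((r j)⁻¹ • (x - a j)), ?_⟩
    rw [hφ, (A j).apply_symm_apply, smul_smul, mul_inv_cancel₀ (hr j).1.ne', one_smul]
    abel
  -- images of FUC sets under the similitudes are FUC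
  have himg : ∀ j (S : Set (EuclideanSpace ℝ (Fin d))), FUC S → FUC (φ j '' S) := by
    intro j S hS
    have hfun : φ j = fun x => (r j • ((A j).toLinearEquiv.toLinearMap)) x + a j := by
      funext x; rw [hφ]; simp
    rw [hfun]
    exact fuc_image _ _ hS
  -- main induction: FUC for every ε ≥ ε₀ * ρ^k
  have key : ∀ k : ℕ, ∀ ε : ℝ, ε₀ * ρ ^ k ≤ ε → FUC {x | infDist x F ≤ ε} := by
    intro k
    induction k with
    | zero =>
      intro ε hle
      rw [pow_zero, mul_one] at hle
      exact fuc_enlarge hFne hFc hε₀ hle h0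
    | succ k ih =>
      intro ε hle
      have hρk : 0 < ε₀ * ρ ^ k := mul_pos hε₀ (pow_pos hρ0 k)
      have hεpos : 0 < ε := lt_of_lt_of_le (mul_pos hε₀ (pow_pos hρ0 (k + 1))) hle
      have hpiece : ∀ j, FUC {x | infDist x (φ j '' F) ≤ ε} := by
        intro j
        have hdiv : ε₀ * ρ ^ k ≤ ε / r j := by
          rw [le_div_iff₀ (hr j).1]
          calc ε₀ * ρ ^ k * r j ≤ ε₀ * ρ ^ k * ρ :=
                mul_le_mul_of_nonneg_left (hrρ j) hρk.le
            _ = ε₀ * ρ ^ (k + 1) := by ring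
            _ ≤ ε := hle
        have hIH : FUC {x | infDist x F ≤ ε / r j} := ih _ hdiv
        have heq := nbd_image (hr j).1 (hdist j) (hsurj j) hFne hFc (ε / r j)
        have hcancel : r j * (ε / r j) = ε := by
          rw [mul_comm]; exact div_mul_cancel₀ ε (hr j).1.ne'
        rw [hcancel] at heq
        rw [heq]
        exact himg j _ hIH
      rw [nbd_decompose hFc hFne hF (fun j => hFne.image _) ε]
      exact fuc_iUnion hpiece
  intro ε hε
  rw [← fuc_iff_fin]
  obtain ⟨k, hk⟩ := exists_pow_lt_of_lt_one (div_pos hε hε₀) hρ1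
  refine key k ε ?_
  have := mul_lt_mul_of_pos_left hk hε₀
  rw [mul_div_cancel₀ _ hε₀.ne'] at this
  exact this.le
end

section
/- Let Φ = {φ_1, …, φ_J} be a self-similar system on ℝ^d with attractor F and convex hull K = [F], and suppose Φ satisfies the tileset condition. Let 𝒢 be the set of connected components of the open set int K \ Φ(K). Then the tiles φ_w(G) — where w ranges over all finite words over {1,…,J} (including the empty word, with φ_∅ = id, and φ_w = φ_{w_k} ∘ ⋯ ∘ φ_{w_1}) and G ranges over 𝒢 — are nonempty open subsets of K \ F, distinct pairs (w, G) give pairwise disjoint tiles, and the closure of the union of all tiles equals the closure of K \ F. -/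
/-!
Write `O = int K \ Φ(K)` and `φ_v` for the word maps. Two images `φ_v(O)`, `φ_w(O)` are
disjoint: cancel the longest common prefix by injectivity; what remains either starts with different
letters, landing in the disjoint interiors of two first-level pieces, or one word is empty and
`O` misses `Φ(K)`. The same peeling shows `φ_v(O)` misses `F ⊆ Φ(F)`, since `K` is convex with
nonempty interior, so every point of `φ_ℓ(K)` is a limit of interior points of `φ_ℓ(K)`.
For density, the level-`n` pieces `φ_v(K)`, `|v| = n`, lie within `cⁿ diam K` of `F`, so a
point `x ∈ K \ F` leaves them at some level; at the last level where `x = φ_v(y)` with `y ∈ K`,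
the point `y` lies in `K \ Φ(K) ⊆ closure O`.
-/

open Set Topology Metric
open scoped NNReal

theorem isCompact_convexHull {E : Type*} [NormedAddCommGroup E] [NormedSpace ℝ E]
    [FiniteDimensional ℝ E] {s : Set E} (hs : IsCompact s) : IsCompact (convexHull ℝ s) := by
  -- Carathéodory: a point of the hull is a convex combination of at most `finrank + 1` points.
  have hunion : convexHull ℝ s = ⋃ k ∈ Finset.range (Module.finrank ℝ E + 2),
      (fun p : (Fin k → ℝ) × (Fin k → E) => ∑ i, p.1 i • p.2 i) ''
        (stdSimplex ℝ (Fin k) ×ˢ univ.pi fun _ => s) := by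
    refine Subset.antisymm (fun x hx => ?_) (iUnion₂_subset fun k _ => ?_)
    · obtain ⟨ι, _, z, w, hzs, hind, hw0, hw1, rfl⟩ := eq_pos_convex_span_of_mem_convexHull hx
      have hcard : Fintype.card ι < Module.finrank ℝ E + 2 := Nat.lt_succ_of_le
        (hind.card_le_finrank_succ.trans (Nat.succ_le_succ (Submodule.finrank_le _)))
      let e := (Fintype.equivFin ι).symm
      refine mem_iUnion₂.2 ⟨_, Finset.mem_range.2 hcard, ⟨w ∘ e, z ∘ e⟩,
        ⟨⟨fun i => (hw0 _).le, ?_⟩, fun i _ => hzs (mem_range_self _)⟩,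
        e.sum_comp fun i => w i • z i⟩
      simpa [e.sum_comp] using hw1
    · rintro _ ⟨⟨w, z⟩, ⟨hw, hz⟩, rfl⟩
      exact (convex_convexHull ℝ s).sum_mem (fun i _ => hw.1 i) hw.2
        fun i _ => subset_convexHull ℝ s (hz i trivial)
  rw [hunion]
  exact (Finset.range _).isCompact_biUnion fun k _ =>
    ((isCompact_stdSimplex _ _).prod (isCompact_univ_pi fun _ => hs)).image (by fun_prop)

theorem AffineMap.mapsTo_convexHull {𝕜 E F : Type*} [Ring 𝕜] [PartialOrder 𝕜]
    [AddCommGroup E] [AddCommGroup F] [Module 𝕜 E] [Module 𝕜 F] (f : E →ᵃ[𝕜] F)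
    {s : Set E} {t : Set F} (h : MapsTo f s t) :
    MapsTo f (convexHull 𝕜 s) (convexHull 𝕜 t) := by
  rw [mapsTo_iff_image_subset, f.image_convexHull]
  exact convexHull_mono h.image_subset

section Similitude

variable {E : Type*} [NormedAddCommGroup E] [NormedSpace ℝ E]

def similitude (r : ℝ) (A : E ≃ₗᵢ[ℝ] E) (a : E) : E →ᵃ[ℝ] E :=
  (r • (A : E →ₗ[ℝ] E)).toAffineMap + AffineMap.const ℝ E a

@[simp]
theorem similitude_apply (r : ℝ) (A : E ≃ₗᵢ[ℝ] E) (a x : E) :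
    similitude r A a x = r • A x + a :=
  rfl

theorem isOpenEmbedding_similitude {r : ℝ} (hr : r ≠ 0) (A : E ≃ₗᵢ[ℝ] E) (a : E) :
    IsOpenEmbedding (similitude r A a) :=
  (Homeomorph.addRight a).isOpenEmbedding.comp
    ((Homeomorph.smulOfNeZero r hr).isOpenEmbedding.comp A.toHomeomorph.isOpenEmbedding)

theorem lipschitzWith_similitude (r : ℝ) (A : E ≃ₗᵢ[ℝ] E) (a : E) :
    LipschitzWith ‖r‖₊ (similitude r A a) :=
  LipschitzWith.of_dist_le_mul fun x y => by
    simp [dist_smul₀, A.dist_map]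

end Similitude

theorem exists_lt_one_forall_lipschitzWith {X ι : Type*} [PseudoEMetricSpace X] [Fintype ι]
    {f : ι → X → X} {k : ι → ℝ≥0} (hf : ∀ j, LipschitzWith (k j) (f j))
    (hk : ∀ j, k j < 1) :
    ∃ c < 1, ∀ j, LipschitzWith c (f j) :=
  ⟨Finset.univ.sup k, (Finset.sup_lt_iff zero_lt_one).2 fun j _ => hk j,
    fun j => (hf j).weaken (Finset.le_sup (Finset.mem_univ j))⟩

theorem infDist_le_mul_of_lipschitzWith {X : Type*} [PseudoMetricSpace X] {f : X → X}
    {c : ℝ≥0} {F : Set X} (hf : LipschitzWith c f) (hF : MapsTo f F F) (x : X) :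
    infDist (f x) F ≤ c * infDist x F := by
  obtain rfl | hFne := F.eq_empty_or_nonempty
  · simp
  have := hFne.to_subtype
  rw [infDist_eq_iInf (x := x), Real.mul_iInf_of_nonneg c.coe_nonneg]
  exact le_ciInf fun y => (infDist_le_dist_of_mem (hF y.2)).trans (hf.dist_le_mul x y)

theorem disjoint_connectedComponentIn_of_ne {X : Type*} [TopologicalSpace X] {O : Set X}
    {x y : X} (h : connectedComponentIn O x ≠ connectedComponentIn O y) :
    Disjoint (connectedComponentIn O x) (connectedComponentIn O y) :=
  disjoint_left.2 fun _ hx hy =>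
    h ((connectedComponentIn_eq hx).trans (connectedComponentIn_eq hy).symm)

theorem biUnion_image_connectedComponentIn {X Y : Type*} [TopologicalSpace X] (f : X → Y)
    (O : Set X) : ⋃ G ∈ {G | ∃ x ∈ O, G = connectedComponentIn O x}, f '' G = f '' O := by
  rw [← image_iUnion₂]
  congr 1
  refine (iUnion₂_subset ?_).antisymm fun x hx =>
    mem_biUnion ⟨x, hx, rfl⟩ (mem_connectedComponentIn hx)
  rintro _ ⟨x, -, rfl⟩
  exact connectedComponentIn_subset O x

theorem image_subset_closure_interior_image {X Y : Type*} [TopologicalSpace X]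
    [TopologicalSpace Y] {f : X → Y} (hfc : Continuous f) (hfo : IsOpenMap f) {K : Set X}
    (hK : K ⊆ closure (interior K)) : f '' K ⊆ closure (interior (f '' K)) :=
  calc f '' K ⊆ f '' closure (interior K) := image_mono hK
    _ ⊆ closure (f '' interior K) := image_closure_subset_closure_image hfc
    _ ⊆ closure (interior (f '' K)) :=
      closure_mono (interior_maximal (image_mono interior_subset) (hfo _ isOpen_interior))

section WordMap

variable {X ι : Type*} {φ : ι → X → X} {K F : Set X}

-- `wordMap φ [j₁, …, jₖ] = φ j₁ ∘ ⋯ ∘ φ jₖ`, the reverse of the order in `φ_w`.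
def wordMap (φ : ι → X → X) (v : List ι) (x : X) : X :=
  v.foldr φ x

@[simp]
theorem wordMap_nil (φ : ι → X → X) : wordMap φ [] = id :=
  rfl

@[simp]
theorem wordMap_cons (φ : ι → X → X) (j : ι) (v : List ι) :
    wordMap φ (j :: v) = φ j ∘ wordMap φ v :=
  rfl

theorem wordMap_append (φ : ι → X → X) (v w : List ι) :
    wordMap φ (v ++ w) = wordMap φ v ∘ wordMap φ w :=
  funext fun _ => List.foldr_append

theorem foldl_eq_wordMap_reverse (φ : ι → X → X) (w : List ι) :
    (fun x => w.foldl (fun y j => φ j y) x) = wordMap φ w.reverse :=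
  funext fun _ => List.foldr_reverse.symm

theorem mapsTo_wordMap (hK : ∀ j, MapsTo (φ j) K K) (v : List ι) :
    MapsTo (wordMap φ v) K K := by
  induction v with
  | nil => exact mapsTo_id K
  | cons j v ih => exact (hK j).comp ih

section Topological

variable [TopologicalSpace X]

theorem continuous_wordMap (hφ : ∀ j, Continuous (φ j)) (v : List ι) :
    Continuous (wordMap φ v) := by
  induction v with
  | nil => exact continuous_id
  | cons j v ih => exact (hφ j).comp ih

theorem isOpenEmbedding_wordMap (hφ : ∀ j, IsOpenEmbedding (φ j)) (v : List ι) :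
    IsOpenEmbedding (wordMap φ v) := by
  induction v with
  | nil => exact .id
  | cons j v ih => exact (hφ j).comp ih

def gapSet (φ : ι → X → X) (K : Set X) : Set X :=
  interior K \ ⋃ j, φ j '' K

theorem isClosed_iUnion_image_of_isCompact [T2Space X] [Finite ι] (hφ : ∀ j, Continuous (φ j))
    (hKc : IsCompact K) : IsClosed (⋃ j, φ j '' K) :=
  isClosed_iUnion_of_finite fun j => (hKc.image (hφ j)).isClosed

theorem gapSet_subset_interior : gapSet φ K ⊆ interior K :=
  sdiff_subset

theorem disjoint_gapSet_image : Disjoint (gapSet φ K) (⋃ j, φ j '' K) :=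
  disjoint_sdiff_left

section Tileset

variable (hφ : ∀ j, IsOpenEmbedding (φ j)) (hK : ∀ j, MapsTo (φ j) K K)
  (hdisj : Pairwise fun j ℓ => Disjoint (interior (φ j '' K)) (interior (φ ℓ '' K)))
include hφ hK

theorem wordMap_cons_image_interior_subset (j : ι) (v : List ι) :
    wordMap φ (j :: v) '' interior K ⊆ interior (φ j '' K) :=
  interior_maximal (by
      rw [wordMap_cons, image_comp]
      exact image_mono ((mapsTo_wordMap hK v).mono_left interior_subset).image_subset)
    ((isOpenEmbedding_wordMap hφ _).isOpenMap _ isOpen_interior)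

theorem wordMap_cons_image_gapSet_subset (j : ι) (v : List ι) :
    wordMap φ (j :: v) '' gapSet φ K ⊆ interior (φ j '' K) :=
  (image_mono gapSet_subset_interior).trans (wordMap_cons_image_interior_subset hφ hK j v)

include hdisj in
theorem pairwise_disjoint_wordMap_image_gapSet :
    Pairwise fun v w : List ι =>
      Disjoint (wordMap φ v '' gapSet φ K) (wordMap φ w '' gapSet φ K) := by
  have hnil : ∀ j v, Disjoint (gapSet φ K) (wordMap φ (j :: v) '' gapSet φ K) := fun j v =>
    disjoint_gapSet_image.mono_right
      (((wordMap_cons_image_gapSet_subset hφ hK j v).trans interior_subset).trans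
        (subset_iUnion (fun j => φ j '' K) j))
  intro v
  induction v with
  | nil =>
    rintro (_ | ⟨j, w⟩) hne
    · exact absurd rfl hne
    · simpa using hnil j w
  | cons j v ih =>
    rintro (_ | ⟨ℓ, w⟩) hne
    · simpa using (hnil j v).symm
    obtain rfl | hjℓ := eq_or_ne j ℓ
    · rw [wordMap_cons, wordMap_cons, image_comp, image_comp]
      exact (disjoint_image_iff (hφ j).injective).2 (ih fun h => hne (h ▸ rfl))
    · exact ((hdisj hjℓ).mono (wordMap_cons_image_gapSet_subset hφ hK j v)
        (wordMap_cons_image_gapSet_subset hφ hK ℓ w))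

include hdisj in
theorem disjoint_wordMap_image_gapSet (hKcl : K ⊆ closure (interior K)) (hFK : F ⊆ K)
    (hF : F ⊆ ⋃ j, φ j '' F) (v : List ι) : Disjoint F (wordMap φ v '' gapSet φ K) := by
  induction v with
  | nil =>
    simpa using (disjoint_gapSet_image.mono_right
      (hF.trans (iUnion_mono fun j => image_mono hFK))).symm
  | cons j v ih =>
    refine disjoint_left.2 fun x hxF hx => ?_
    obtain ⟨ℓ, z, hzF, rfl⟩ : ∃ ℓ, ∃ z ∈ F, φ ℓ z = x := by simpa using hF hxF
    obtain rfl | hjℓ := eq_or_ne j ℓ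
    · rw [wordMap_cons, image_comp, (hφ j).injective.mem_set_image] at hx
      exact disjoint_left.1 ih hzF hx
    · exact disjoint_left.1 ((hdisj hjℓ).closure_right isOpen_interior)
        (wordMap_cons_image_gapSet_subset hφ hK j v hx)
        (image_subset_closure_interior_image (hφ ℓ).continuous (hφ ℓ).isOpenMap hKcl
          (mem_image_of_mem _ (hFK hzF)))

include hdisj in
theorem wordMap_image_gapSet_subset_diff (hKcl : K ⊆ closure (interior K)) (hFK : F ⊆ K)
    (hF : F ⊆ ⋃ j, φ j '' F) (v : List ι) : wordMap φ v '' gapSet φ K ⊆ K \ F :=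
  subset_sdiff.2 ⟨(image_mono (gapSet_subset_interior.trans interior_subset)).trans
      (mapsTo_wordMap hK v).image_subset,
    (disjoint_wordMap_image_gapSet hφ hK hdisj hKcl hFK hF v).symm⟩

include hdisj in
theorem disjoint_wordMap_image_connectedComponentIn {v v' : List ι} {x x' : X}
    (hne : (v, connectedComponentIn (gapSet φ K) x) ≠
      (v', connectedComponentIn (gapSet φ K) x')) :
    Disjoint (wordMap φ v '' connectedComponentIn (gapSet φ K) x)
      (wordMap φ v' '' connectedComponentIn (gapSet φ K) x') := by
  obtain rfl | hvv := eq_or_ne v v'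
  · exact (disjoint_image_iff (isOpenEmbedding_wordMap hφ v).injective).2
      (disjoint_connectedComponentIn_of_ne fun h => hne (h ▸ rfl))
  · exact (pairwise_disjoint_wordMap_image_gapSet hφ hK hdisj hvv).mono
      (image_mono (connectedComponentIn_subset _ _)) (image_mono (connectedComponentIn_subset _ _))

end Tileset

theorem mem_closure_gapSet (hKcl : K ⊆ closure (interior K))
    (hU : IsClosed (⋃ j, φ j '' K)) {y : X} (hyK : y ∈ K) (hyU : y ∉ ⋃ j, φ j '' K) :
    y ∈ closure (gapSet φ K) := by
  rw [gapSet, sdiff_eq, inter_comm]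
  exact hU.isOpen_compl.inter_closure ⟨hyU, hKcl hyK⟩

theorem mem_closure_iUnion_wordMap_image_gapSet (hφ : ∀ j, Continuous (φ j))
    (hKcl : K ⊆ closure (interior K)) (hU : IsClosed (⋃ j, φ j '' K)) {x : X} (hxK : x ∈ K)
    {n : ℕ} (hn : ∀ v : List ι, v.length = n → x ∉ wordMap φ v '' K) :
    x ∈ closure (⋃ v, wordMap φ v '' gapSet φ K) := by
  obtain ⟨m, ⟨v, rfl, y, hyK, rfl⟩, hm⟩ :
      ∃ m, (∃ v : List ι, v.length = m ∧ x ∈ wordMap φ v '' K) ∧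
        ∀ w : List ι, w.length = m + 1 → x ∉ wordMap φ w '' K := by
    -- the last level at which `x` still lies in a piece
    by_contra! h
    have hall : ∀ k, ∃ v : List ι, v.length = k ∧ x ∈ wordMap φ v '' K := by
      intro k
      induction k with
      | zero => exact ⟨[], rfl, by simpa using hxK⟩
      | succ k ih => exact h k ih
    obtain ⟨v, hv, hx⟩ := hall n
    exact hn v hv hx
  have hyU : y ∉ ⋃ j, φ j '' K := by
    rintro ⟨_, ⟨j, rfl⟩, z, hzK, rfl⟩
    exact hm (v ++ [j]) (by simp) ⟨z, hzK, by simp [wordMap_append]⟩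
  exact closure_mono (subset_iUnion (fun v => wordMap φ v '' gapSet φ K) v)
    (image_closure_subset_closure_image (continuous_wordMap hφ v)
      (mem_image_of_mem _ (mem_closure_gapSet hKcl hU hyK hyU)))

end Topological

theorem exists_forall_notMem_wordMap_image [PseudoMetricSpace X] {c : ℝ≥0} (hc : c < 1)
    (hφ : ∀ j, LipschitzWith c (φ j)) (hF : ∀ j, MapsTo (φ j) F F) (hFne : F.Nonempty)
    (hFc : IsClosed F) (hFK : F ⊆ K) (hKb : Bornology.IsBounded K) {x : X} (hx : x ∉ F) :
    ∃ n, ∀ v : List ι, v.length = n → x ∉ wordMap φ v '' K := by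
  have hbound : ∀ v : List ι, ∀ y ∈ K,
      infDist (wordMap φ v y) F ≤ c ^ v.length * diam K := by
    intro v
    induction v with
    | nil =>
      intro y hy
      obtain ⟨z, hz⟩ := hFne
      simpa using (infDist_le_dist_of_mem hz).trans (dist_le_diam_of_mem hKb hy (hFK hz))
    | cons j v ih =>
      intro y hy
      calc infDist (φ j (wordMap φ v y)) F ≤ c * infDist (wordMap φ v y) F :=
            infDist_le_mul_of_lipschitzWith (hφ j) (hF j) _
        _ ≤ c * (c ^ v.length * diam K) := by gcongr; exact ih y hy
        _ = c ^ (j :: v).length * diam K := by rw [List.length_cons, pow_succ]; ring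
  have hpos : 0 < infDist x F := (hFc.notMem_iff_infDist_pos hFne).1 hx
  obtain ⟨n, hn⟩ : ∃ n : ℕ, (c : ℝ) ^ n * diam K < infDist x F :=
    (((tendsto_pow_atTop_nhds_zero_of_lt_one c.coe_nonneg hc).mul_const (diam K)).eventually
      (gt_mem_nhds (by simpa using hpos))).exists
  refine ⟨n, ?_⟩
  rintro v rfl ⟨y, hy, rfl⟩
  exact (hbound v y hy).not_gt hn

theorem closure_iUnion_wordMap_image_gapSet [MetricSpace X] [Finite ι] {c : ℝ≥0} (hc : c < 1)
    (hlip : ∀ j, LipschitzWith c (φ j)) (hφ : ∀ j, IsOpenEmbedding (φ j))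
    (hK : ∀ j, MapsTo (φ j) K K) (hKc : IsCompact K) (hKcl : K ⊆ closure (interior K))
    (hdisj : Pairwise fun j ℓ => Disjoint (interior (φ j '' K)) (interior (φ ℓ '' K)))
    (hFne : F.Nonempty) (hFc : IsClosed F) (hFK : F ⊆ K) (hF : F = ⋃ j, φ j '' F) :
    closure (⋃ v, wordMap φ v '' gapSet φ K) = closure (K \ F) := by
  refine (closure_mono (iUnion_subset
    (wordMap_image_gapSet_subset_diff hφ hK hdisj hKcl hFK hF.subset))).antisymm
      (closure_minimal (fun x hx => ?_) isClosed_closure)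
  obtain ⟨n, hn⟩ := exists_forall_notMem_wordMap_image hc hlip
    (fun j => mapsTo_iff_image_subset.2 (iUnion_subset_iff.1 hF.ge j)) hFne hFc hFK
    hKc.isBounded hx.2
  have hcont : ∀ j, Continuous (φ j) := fun j => (hφ j).continuous
  exact mem_closure_iUnion_wordMap_image_gapSet hcont hKcl
    (isClosed_iUnion_image_of_isCompact hcont hKc) hx.1 hn

end WordMap

theorem stmt_10_general (d J : ℕ)
    (r : Fin J → ℝ) (hr : ∀ j, r j ∈ Set.Ioo (0 : ℝ) 1)
    (A : Fin J → (EuclideanSpace ℝ (Fin d) ≃ₗᵢ[ℝ] EuclideanSpace ℝ (Fin d)))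
    (a : Fin J → EuclideanSpace ℝ (Fin d))
    (φ : Fin J → EuclideanSpace ℝ (Fin d) → EuclideanSpace ℝ (Fin d))
    (hφ : ∀ j x, φ j x = r j • (A j x) + a j)
    (F : Set (EuclideanSpace ℝ (Fin d)))
    (hFne : F.Nonempty) (hFc : IsCompact F) (hF : F = ⋃ j, φ j '' F)
    (K : Set (EuclideanSpace ℝ (Fin d))) (hK : K = convexHull ℝ F)
    (htile1 : ¬ interior K ⊆ ⋃ j, φ j '' K)
    (htile2 : ∀ j ℓ, j ≠ ℓ → interior (φ j '' K) ∩ interior (φ ℓ '' K) = ∅)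
    (O : Set (EuclideanSpace ℝ (Fin d))) (hO : O = interior K \ ⋃ j, φ j '' K)
    (𝒢 : Set (Set (EuclideanSpace ℝ (Fin d))))
    (h𝒢 : 𝒢 = {G | ∃ x ∈ O, G = connectedComponentIn O x})
    (tile : List (Fin J) → Set (EuclideanSpace ℝ (Fin d)) → Set (EuclideanSpace ℝ (Fin d)))
    (htile : ∀ w G, tile w G = (fun x => w.foldl (fun y j => φ j y) x) '' G) :
    (∀ (w : List (Fin J)), ∀ G ∈ 𝒢,
        (tile w G).Nonempty ∧ IsOpen (tile w G) ∧ tile w G ⊆ K \ F) ∧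
    (∀ (w w' : List (Fin J)) (G G' : Set (EuclideanSpace ℝ (Fin d))),
        G ∈ 𝒢 → G' ∈ 𝒢 → (w, G) ≠ (w', G') → Disjoint (tile w G) (tile w' G')) ∧
    closure (⋃ w : List (Fin J), ⋃ G ∈ 𝒢, tile w G) = closure (K \ F) := by
  have hφeq : ∀ j, φ j = similitude (r j) (A j) (a j) := fun j => funext (hφ j)
  have hemb : ∀ j, IsOpenEmbedding (φ j) := fun j =>
    hφeq j ▸ isOpenEmbedding_similitude (hr j).1.ne' (A j) (a j)
  obtain ⟨c, hc, hlip⟩ := exists_lt_one_forall_lipschitzWith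
    (fun j => hφeq j ▸ lipschitzWith_similitude (r j) (A j) (a j)) fun j => by
      simpa [← NNReal.coe_lt_coe, abs_of_pos (hr j).1] using (hr j).2
  have hFφ : ∀ j, MapsTo (φ j) F F := fun j =>
    mapsTo_iff_image_subset.2 (iUnion_subset_iff.1 hF.ge j)
  have hKφ : ∀ j, MapsTo (φ j) K K := fun j =>
    hK ▸ hφeq j ▸ (similitude (r j) (A j) (a j)).mapsTo_convexHull (hφeq j ▸ hFφ j)
  have hKc : IsCompact K := hK ▸ isCompact_convexHull hFc
  have hKconv : Convex ℝ K := hK ▸ convex_convexHull ℝ F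
  have hKcl : K ⊆ closure (interior K) := (hKconv.closure_interior_eq_closure_of_nonempty_interior
    (nonempty_of_not_subset htile1).of_sdiff).symm ▸ subset_closure
  have hdisj : Pairwise fun j ℓ => Disjoint (interior (φ j '' K)) (interior (φ ℓ '' K)) :=
    fun j ℓ h => disjoint_iff_inter_eq_empty.2 (htile2 j ℓ h)
  have hFK : F ⊆ K := hK ▸ subset_convexHull ℝ F
  change O = gapSet φ K at hO
  subst hO h𝒢
  simp only [htile, foldl_eq_wordMap_reverse]
  refine ⟨?_, ?_, ?_⟩
  · rintro w _ ⟨x, hx, rfl⟩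
    have hOopen : IsOpen (gapSet φ K) := isOpen_interior.sdiff
      (isClosed_iUnion_image_of_isCompact (fun j => (hemb j).continuous) hKc)
    exact ⟨⟨_, mem_image_of_mem _ (mem_connectedComponentIn hx)⟩,
      (isOpenEmbedding_wordMap hemb _).isOpenMap _ hOopen.connectedComponentIn,
      (image_mono (connectedComponentIn_subset _ _)).trans
        (wordMap_image_gapSet_subset_diff hemb hKφ hdisj hKcl hFK hF.subset _)⟩
  · rintro w w' _ _ ⟨x, -, rfl⟩ ⟨x', -, rfl⟩ hne
    exact disjoint_wordMap_image_connectedComponentIn hemb hKφ hdisj (by simpa using hne)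
  · simp only [biUnion_image_connectedComponentIn]
    rw [List.reverse_surjective.iUnion_comp (fun v => wordMap φ v '' gapSet φ K)]
    exact closure_iUnion_wordMap_image_gapSet hc hlip hemb hKφ hKc hKcl hdisj hFne hFc.isClosed
      hFK hF

/-- Let `Φ = {φ_1, …, φ_J}` be a self-similar system on `ℝ^d`
with attractor `F` and convex hull `K = [F]`, satisfying the tileset condition.
Let `𝒢` be the set of connected components of `O := int K \ ⋃_j φ_j(K)`.  Then
the tiles `φ_w(G)` — where `w` ranges over all finite words (with
`φ_w = φ_{w_k} ∘ ⋯ ∘ φ_{w_1}`, the empty word giving the identity) and `G ∈ 𝒢` —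
are nonempty open subsets of `K \ F`, distinct pairs `(w, G)` give pairwise
disjoint tiles, and the closure of the union of all tiles equals the closure of
`K \ F`. -/
theorem stmt_10 (d J : ℕ) (hd : 1 ≤ d) (hJ : 2 ≤ J)
    (r : Fin J → ℝ) (hr : ∀ j, r j ∈ Set.Ioo (0 : ℝ) 1)
    (A : Fin J → (EuclideanSpace ℝ (Fin d) ≃ₗᵢ[ℝ] EuclideanSpace ℝ (Fin d)))
    (a : Fin J → EuclideanSpace ℝ (Fin d))
    (φ : Fin J → EuclideanSpace ℝ (Fin d) → EuclideanSpace ℝ (Fin d))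
    (hφ : ∀ j x, φ j x = r j • (A j x) + a j)
    (F : Set (EuclideanSpace ℝ (Fin d)))
    (hFne : F.Nonempty) (hFc : IsCompact F) (hF : F = ⋃ j, φ j '' F)
    (K : Set (EuclideanSpace ℝ (Fin d))) (hK : K = convexHull ℝ F)
    (htile1 : ¬ interior K ⊆ ⋃ j, φ j '' K)
    (htile2 : ∀ j ℓ, j ≠ ℓ → interior (φ j '' K) ∩ interior (φ ℓ '' K) = ∅)
    (O : Set (EuclideanSpace ℝ (Fin d))) (hO : O = interior K \ ⋃ j, φ j '' K)
    (𝒢 : Set (Set (EuclideanSpace ℝ (Fin d))))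
    (h𝒢 : 𝒢 = {G | ∃ x ∈ O, G = connectedComponentIn O x})
    (tile : List (Fin J) → Set (EuclideanSpace ℝ (Fin d)) → Set (EuclideanSpace ℝ (Fin d)))
    (htile : ∀ w G, tile w G = (fun x => w.foldl (fun y j => φ j y) x) '' G) :
    (∀ (w : List (Fin J)), ∀ G ∈ 𝒢,
        (tile w G).Nonempty ∧ IsOpen (tile w G) ∧ tile w G ⊆ K \ F) ∧
    (∀ (w w' : List (Fin J)) (G G' : Set (EuclideanSpace ℝ (Fin d))),
        G ∈ 𝒢 → G' ∈ 𝒢 → (w, G) ≠ (w', G') → Disjoint (tile w G) (tile w' G')) ∧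
    closure (⋃ w : List (Fin J), ⋃ G ∈ 𝒢, tile w G) = closure (K \ F) :=
  stmt_10_general d J r hr A a φ hφ F hFne hFc hF K hK htile1 htile2 O hO 𝒢 h𝒢 tile htile
end

section
/- Let F ⊆ ℝ^d be a nonempty compact set and K its convex hull, and suppose ∂K ⊆ F. Then for every ε > 0: (1) for every x ∉ K, dist(x, F) = dist(x, K); and consequently (2) vol_d({x ∈ ℝ^d \ F : dist(x, F) ≤ ε}) = vol_d({x ∈ K \ F : dist(x, F) ≤ ε}) + vol_d({x ∈ ℝ^d \ K : dist(x, K) ≤ ε}). That is, the exterior ε-neighbourhood of F decomposes as the disjoint union of its part inside K and the exterior ε-neighbourhood of K. -/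
open MeasureTheory Metric

/-- Let `F ⊆ ℝ^d` be a nonempty compact set, `K` its convex hull,
and suppose `∂K ⊆ F`.  Then for every `ε > 0`:
(1) for every `x ∉ K`, `dist(x,F) = dist(x,K)`; and consequently
(2) `vol_d({x ∉ F : dist(x,F) ≤ ε}) = vol_d({x ∈ K \ F : dist(x,F) ≤ ε})
     + vol_d({x ∉ K : dist(x,K) ≤ ε})`;
the exterior `ε`-neighbourhood of `F` decomposes as the disjoint union of its part
inside `K` and the exterior `ε`-neighbourhood of `K`. -/
theorem stmt_16 (d : ℕ) (F K : Set (EuclideanSpace ℝ (Fin d)))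
    (hFne : F.Nonempty) (hFc : IsCompact F)
    (hK : K = convexHull ℝ F) (hbd : frontier K ⊆ F) :
    (∀ x ∉ K, infDist x F = infDist x K) ∧
    ∀ ε : ℝ, 0 < ε →
      volume {x | x ∉ F ∧ infDist x F ≤ ε}
        = volume {x ∈ K \ F | infDist x F ≤ ε}
          + volume {x | x ∉ K ∧ infDist x K ≤ ε} := by
  have hFK : F ⊆ K := hK ▸ subset_convexHull ℝ F
  have hKconv : Convex ℝ K := hK ▸ convex_convexHull ℝ F
  have hKne : K.Nonempty := hFne.mono hFK
  have h1 : ∀ x ∉ K, infDist x F = infDist x K := by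
    intro x hx
    refine le_antisymm ?_ (infDist_le_infDist_of_subset hFK hFne)
    -- nearest point in the closure of K
    obtain ⟨y, hyK, hyd⟩ :=
      isClosed_closure.exists_infDist_eq_dist (hKne.mono subset_closure) x
    rw [infDist_closure] at hyd
    by_cases hyint : y ∈ interior K
    · -- y in the interior: we can move towards x and contradict minimality,
      -- unless x = y, which is impossible since x ∉ K.
      exfalso
      have hxy : 0 < dist x y := by
        rw [dist_pos]
        rintro rfl
        exact hx (interior_subset hyint)
      obtain ⟨r, hr, hball⟩ := Metric.isOpen_iff.mp isOpen_interior y hyint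
      set t : ℝ := min (r / (2 * dist x y)) (1 / 2) with ht
      have ht0 : 0 < t := lt_min (by positivity) (by norm_num)
      have ht1 : t ≤ 1 / 2 := min_le_right _ _
      set z := y + t • (x - y) with hz
      have hzy : dist z y = t * dist x y := by
        rw [dist_eq_norm, hz, add_sub_cancel_left, norm_smul, Real.norm_eq_abs,
          abs_of_pos ht0, dist_eq_norm]
      have hzball : z ∈ Metric.ball y r := by
        rw [Metric.mem_ball, hzy]
        calc t * dist x y ≤ r / (2 * dist x y) * dist x y := by
              have := min_le_left (r / (2 * dist x y)) (1 / 2)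
              nlinarith
          _ = r / 2 := by field_simp
          _ < r := by linarith
      have hzK : z ∈ K := interior_subset (hball hzball)
      have hxz : dist x z = (1 - t) * dist x y := by
        rw [dist_eq_norm, hz, dist_eq_norm]
        have : x - (y + t • (x - y)) = (1 - t) • (x - y) := by
          rw [sub_smul, one_smul]; abel
        rw [this, norm_smul, Real.norm_eq_abs, abs_of_pos (by linarith)]
      have hle : infDist x K ≤ dist x z := infDist_le_dist_of_mem hzK
      rw [hyd] at hle
      nlinarith
    · -- y is on the frontier, hence in F
      have hyF : y ∈ F := hbd ⟨hyK, hyint⟩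
      rw [hyd]
      exact infDist_le_dist_of_mem hyF
  refine ⟨h1, fun ε hε => ?_⟩
  have hB : NullMeasurableSet {x | x ∉ K ∧ infDist x K ≤ ε} volume := by
    have : {x | x ∉ K ∧ infDist x K ≤ ε} = Kᶜ ∩ {x | infDist x K ≤ ε} := rfl
    rw [this]
    exact ((Convex.nullMeasurableSet (μ := volume) hKconv).compl).inter
      ((isClosed_le (continuous_infDist_pt K) continuous_const).measurableSet.nullMeasurableSet)
  have hset : {x | x ∉ F ∧ infDist x F ≤ ε}
      = {x ∈ K \ F | infDist x F ≤ ε} ∪ {x | x ∉ K ∧ infDist x K ≤ ε} := by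
    ext x
    simp only [Set.mem_setOf_eq, Set.mem_union, Set.mem_sep_iff, Set.mem_diff]
    constructor
    · rintro ⟨hxF, hd⟩
      by_cases hxK : x ∈ K
      · exact Or.inl ⟨⟨hxK, hxF⟩, hd⟩
      · exact Or.inr ⟨hxK, le_of_eq_of_le (h1 x hxK).symm hd⟩
    · rintro (⟨⟨_, hxF⟩, hd⟩ | ⟨hxK, hd⟩)
      · exact ⟨hxF, hd⟩
      · exact ⟨fun h => hxK (hFK h), (h1 x hxK).trans_le hd⟩
  rw [hset]
  refine measure_union₀ hB ?_
  exact (Set.disjoint_left.mpr fun x hx hx' => hx'.1 hx.1.1).aedisjoint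
end
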